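/- arXiv:2306.16653 — 9 statements merged into one kernel-verified Lean document; each statement's English description precedes it below -/
import Mathlib

section
/- Let P be the canonical probability measure on the Cantor set, viewed as a measure on ℝ × {0} ⊂ ℝ². The singleton {(1/2, 1)} minimizes the distortion error α ↦ ∫ ρ(x, a) dP(x) over all singletons α = {(a, 1)} with a ∈ [0,1] lying on the line y = 1, and the minimal value is 9/8, where ρ((x,0),(a,b)) = (x-a)² + b². -/
open MeasureTheory Real Set Filter
open scoped ENNReal Topology

noncomputable section

/-- First generating map of the Cantor set. -/
def T1 (x : ℝ) : ℝ := x / 3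

/-- Second generating map of the Cantor set. -/
def T2 (x : ℝ) : ℝ := x / 3 + 2 / 3

/-- Map indexed by `Fin 2`. -/
def Tm : Fin 2 → ℝ → ℝ := ![T1, T2]

/-- Composition `T_σ = T_{σ₁} ∘ ⋯ ∘ T_{σ_k}` for a word over `{1,2}` (as a list over `Fin 2`). -/
def Tw (l : List (Fin 2)) : ℝ → ℝ := l.foldr (fun i g => Tm i ∘ g) id

/-- Squared Euclidean distance between `x ∈ ℝ` (identified with `(x,0)`) and `(a,b) ∈ ℝ²`. -/
def rho (x : ℝ) (p : ℝ × ℝ) : ℝ := (x - p.1) ^ 2 + p.2 ^ 2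

/-- Distortion error of a set `α ⊆ ℝ²` for `P`. -/
def distortion (P : Measure ℝ) (α : Set (ℝ × ℝ)) : ℝ := ∫ x, ⨅ a : α, rho x (a : ℝ × ℝ) ∂P

/-- The constraint `S_j = {(x, 1/j) : 0 ≤ x ≤ 1}`. -/
def Sj (j : ℕ) : Set (ℝ × ℝ) := {p | p.1 ∈ Icc (0 : ℝ) 1 ∧ p.2 = 1 / (j : ℝ)}

/-- The `n`th constrained quantization error for `P` with respect to the family `Sj`. -/
def Vc (P : Measure ℝ) (n : ℕ) : ℝ :=
  sInf {e : ℝ | ∃ α : Finset (ℝ × ℝ), α.Nonempty ∧ α.card ≤ n ∧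
    (↑α : Set (ℝ × ℝ)) ⊆ ⋃ j ∈ Finset.Icc 1 n, Sj j ∧ e = distortion P (↑α : Set (ℝ × ℝ))}


-- Auxiliary lemmas
lemma hT1 : Measurable T1 := by unfold T1; fun_prop
lemma hT2 : Measurable T2 := by unfold T2; fun_prop

lemma measEq (P : Measure ℝ)
    (hP : P = (1 / 2 : ℝ≥0∞) • P.map T1 + (1 / 2 : ℝ≥0∞) • P.map T2)
    {A : Set ℝ} (hA : MeasurableSet A) :
    P A = 1/2 * P (T1 ⁻¹' A) + 1/2 * P (T2 ⁻¹' A) := by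
  conv_lhs => rw [hP]
  rw [Measure.add_apply, Measure.smul_apply, Measure.smul_apply,
      Measure.map_apply hT1 hA, Measure.map_apply hT2 hA]
  simp [smul_eq_mul]

-- ENNReal splitting lemma
lemma halfsplit {a b c : ℝ≥0∞} (hc : c ≠ ∞) (ha : a ≤ c) (hb : b ≤ c)
    (h : c = 1/2 * a + 1/2 * b) : a = c ∧ b = c := by
  have haT : a ≠ ∞ := ne_top_of_le_ne_top hc ha
  have hbT : b ≠ ∞ := ne_top_of_le_ne_top hc hb
  have h2 : (1/2 : ℝ≥0∞) ≠ ∞ := by norm_num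
  have := congrArg ENNReal.toReal h
  rw [ENNReal.toReal_add (by finiteness) (by finiteness), ENNReal.toReal_mul,
      ENNReal.toReal_mul] at this
  have h2r : (1/2 : ℝ≥0∞).toReal = 1/2 := by norm_num
  have har := (ENNReal.toReal_le_toReal haT hc).2 ha
  have hbr := (ENNReal.toReal_le_toReal hbT hc).2 hb
  constructor
  · exact (ENNReal.toReal_eq_toReal_iff' haT hc).1 (by rw [h2r] at this; linarith)
  · exact (ENNReal.toReal_eq_toReal_iff' hbT hc).1 (by rw [h2r] at this; linarith)

lemma suppLeft (P : Measure ℝ) [IsProbabilityMeasure P]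
    (hP : P = (1 / 2 : ℝ≥0∞) • P.map T1 + (1 / 2 : ℝ≥0∞) • P.map T2) :
    P (Iio 0) = 0 := by
  set c := P (Iio (0:ℝ)) with hc
  have key : ∀ n : ℕ, P (Iio (-((3:ℝ)^n - 1))) = c := by
    intro n
    induction n with
    | zero => simp [hc]
    | succ n ih =>
      set t : ℝ := -((3:ℝ)^n - 1) with ht
      have htle : t ≤ 0 := by
        have : (1:ℝ) ≤ 3^n := one_le_pow₀ (by norm_num)
        simp [ht]; linarith
      have hpre1 : T1 ⁻¹' (Iio t) = Iio (3*t) := by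
        ext x; simp [T1, Set.mem_Iio]; constructor <;> intro h <;> linarith
      have hpre2 : T2 ⁻¹' (Iio t) = Iio (3*t - 2) := by
        ext x; simp [T2, Set.mem_Iio]; constructor <;> intro h <;> linarith
      have heq := measEq P hP (measurableSet_Iio (a := t))
      rw [hpre1, hpre2, ih] at heq
      have hsub1 : Iio (3*t) ⊆ Iio (0:ℝ) := Iio_subset_Iio (by linarith)
      have hsub2 : Iio (3*t - 2) ⊆ Iio (0:ℝ) := Iio_subset_Iio (by linarith)
      have := (halfsplit (measure_ne_top P _) (measure_mono hsub1) (measure_mono hsub2) heq).2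
      have harg : 3*t - 2 = -((3:ℝ)^(n+1) - 1) := by rw [ht]; ring
      rw [harg] at this
      exact this
  have hanti : Antitone (fun n : ℕ => Iio (-((3:ℝ)^n - 1))) := by
    intro m n hmn
    exact Iio_subset_Iio (by
      have : (3:ℝ)^m ≤ 3^n := pow_le_pow_right₀ (by norm_num) hmn
      linarith)
  have hempty : ⋂ n : ℕ, Iio (-((3:ℝ)^n - 1)) = ∅ := by
    ext x
    simp only [Set.mem_iInter, Set.mem_Iio, Set.mem_empty_iff_false, iff_false, not_forall, not_lt]
    obtain ⟨n, hn⟩ := pow_unbounded_of_one_lt (1 - x) (by norm_num : (1:ℝ) < 3)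
    exact ⟨n, by linarith⟩
  have := tendsto_measure_iInter_atTop
    (fun n => (measurableSet_Iio).nullMeasurableSet) hanti ⟨0, measure_ne_top P _⟩
  rw [hempty] at this
  have hconst : Tendsto (fun _ : ℕ => c) atTop (𝓝 (P (∅ : Set ℝ))) := by
    convert this using 1
    funext n; exact (key n).symm
  rw [measure_empty] at hconst
  exact tendsto_nhds_unique tendsto_const_nhds hconst

lemma suppRight (P : Measure ℝ) [IsProbabilityMeasure P]
    (hP : P = (1 / 2 : ℝ≥0∞) • P.map T1 + (1 / 2 : ℝ≥0∞) • P.map T2) :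
    P (Ioi 1) = 0 := by
  set c := P (Ioi (1:ℝ)) with hc
  have key : ∀ n : ℕ, P (Ioi ((3:ℝ)^n)) = c := by
    intro n
    induction n with
    | zero => simp [hc]
    | succ n ih =>
      set t : ℝ := (3:ℝ)^n with ht
      have htge : (1:ℝ) ≤ t := one_le_pow₀ (by norm_num)
      have hpre1 : T1 ⁻¹' (Ioi t) = Ioi (3*t) := by
        ext x; simp [T1, Set.mem_Ioi]; constructor <;> intro h <;> linarith
      have hpre2 : T2 ⁻¹' (Ioi t) = Ioi (3*t - 2) := by
        ext x; simp [T2, Set.mem_Ioi]; constructor <;> intro h <;> linarith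
      have heq := measEq P hP (measurableSet_Ioi (a := t))
      rw [hpre1, hpre2, ih] at heq
      have hsub1 : Ioi (3*t) ⊆ Ioi (1:ℝ) := Ioi_subset_Ioi (by linarith)
      have hsub2 : Ioi (3*t - 2) ⊆ Ioi (1:ℝ) := Ioi_subset_Ioi (by linarith)
      have := (halfsplit (measure_ne_top P _) (measure_mono hsub1) (measure_mono hsub2) heq).1
      have harg : 3*t = (3:ℝ)^(n+1) := by rw [ht]; ring
      rw [harg] at this
      exact this
  have hanti : Antitone (fun n : ℕ => Ioi ((3:ℝ)^n)) := by
    intro m n hmn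
    exact Ioi_subset_Ioi (pow_le_pow_right₀ (by norm_num) hmn)
  have hempty : ⋂ n : ℕ, Ioi ((3:ℝ)^n) = ∅ := by
    ext x
    simp only [Set.mem_iInter, Set.mem_Ioi, Set.mem_empty_iff_false, iff_false, not_forall, not_lt]
    obtain ⟨n, hn⟩ := pow_unbounded_of_one_lt x (by norm_num : (1:ℝ) < 3)
    exact ⟨n, le_of_lt hn⟩
  have := tendsto_measure_iInter_atTop
    (fun n => (measurableSet_Ioi).nullMeasurableSet) hanti ⟨0, measure_ne_top P _⟩
  rw [hempty] at this
  have hconst : Tendsto (fun _ : ℕ => c) atTop (𝓝 (P (∅ : Set ℝ))) := by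
    convert this using 1
    funext n; exact (key n).symm
  rw [measure_empty] at hconst
  exact tendsto_nhds_unique tendsto_const_nhds hconst

lemma aeUnit (P : Measure ℝ) [IsProbabilityMeasure P]
    (hP : P = (1 / 2 : ℝ≥0∞) • P.map T1 + (1 / 2 : ℝ≥0∞) • P.map T2) :
    ∀ᵐ x ∂P, x ∈ Icc (0:ℝ) 1 := by
  have hcompl : (Icc (0:ℝ) 1)ᶜ = Iio 0 ∪ Ioi 1 := by
    ext x
    simp only [Set.mem_compl_iff, Set.mem_Icc, Set.mem_union, Set.mem_Iio, Set.mem_Ioi,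
      not_and_or, not_le]
  have : P ((Icc (0:ℝ) 1)ᶜ) = 0 := by
    rw [hcompl]
    exact measure_union_null (suppLeft P hP) (suppRight P hP)
  exact ae_iff.2 this


-- integrability of functions bounded on [0,1]
lemma intOfBdd (P : Measure ℝ) [IsProbabilityMeasure P]
    (hae : ∀ᵐ x ∂P, x ∈ Icc (0:ℝ) 1)
    {f : ℝ → ℝ} (hf : Measurable f) {C : ℝ}
    (hC : ∀ x ∈ Icc (0:ℝ) 1, |f x| ≤ C) : Integrable f P := by
  refine (integrable_const C).mono' hf.aestronglyMeasurable ?_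
  filter_upwards [hae] with x hx
  simpa [Real.norm_eq_abs] using hC x hx

-- transfer lemma
lemma transfer (P : Measure ℝ) [IsProbabilityMeasure P]
    (hP : P = (1 / 2 : ℝ≥0∞) • P.map T1 + (1 / 2 : ℝ≥0∞) • P.map T2)
    {f : ℝ → ℝ} (hf : Measurable f)
    (h1 : Integrable (fun x => f (T1 x)) P) (h2 : Integrable (fun x => f (T2 x)) P) :
    ∫ x, f x ∂P = (1/2) * (∫ x, f (T1 x) ∂P) + (1/2) * (∫ x, f (T2 x) ∂P) := by
  have hm1 : Integrable f (P.map T1) :=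
    (integrable_map_measure hf.aestronglyMeasurable hT1.aemeasurable).2 h1
  have hm2 : Integrable f (P.map T2) :=
    (integrable_map_measure hf.aestronglyMeasurable hT2.aemeasurable).2 h2
  conv_lhs => rw [hP]
  rw [integral_add_measure (hm1.smul_measure (by norm_num)) (hm2.smul_measure (by norm_num)),
      integral_smul_measure, integral_smul_measure,
      integral_map hT1.aemeasurable hf.aestronglyMeasurable,
      integral_map hT2.aemeasurable hf.aestronglyMeasurable]
  norm_num

lemma moment1 (P : Measure ℝ) [IsProbabilityMeasure P]
    (hP : P = (1 / 2 : ℝ≥0∞) • P.map T1 + (1 / 2 : ℝ≥0∞) • P.map T2)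
    (hae : ∀ᵐ x ∂P, x ∈ Icc (0:ℝ) 1) :
    ∫ x, x ∂P = 1/2 := by
  have hid : Integrable (fun x : ℝ => x) P :=
    intOfBdd P hae measurable_id (C := 1) (fun x hx => by rw [abs_le]; exact ⟨by linarith [hx.1], hx.2⟩)
  have h1 : Integrable (fun x => T1 x) P := by
    simpa [T1] using hid.div_const 3
  have h2 : Integrable (fun x => T2 x) P := by
    have := (hid.div_const 3).add (integrable_const (2/3 : ℝ))
    simpa [T2] using this
  have e := transfer P hP (f := fun x => x) measurable_id h1 h2
  have eT1 : ∫ x, T1 x ∂P = (∫ x, x ∂P) / 3 := by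
    simp only [T1]; rw [integral_div]
  have eT2 : ∫ x, T2 x ∂P = (∫ x, x ∂P) / 3 + 2/3 := by
    simp only [T2]
    rw [integral_add (hid.div_const 3) (integrable_const _), integral_div, integral_const]
    simp
  rw [eT1, eT2] at e
  linarith

lemma moment2 (P : Measure ℝ) [IsProbabilityMeasure P]
    (hP : P = (1 / 2 : ℝ≥0∞) • P.map T1 + (1 / 2 : ℝ≥0∞) • P.map T2)
    (hae : ∀ᵐ x ∂P, x ∈ Icc (0:ℝ) 1) :
    ∫ x, x^2 ∂P = 3/8 := by
  have hid : Integrable (fun x : ℝ => x) P :=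
    intOfBdd P hae measurable_id (C := 1) (fun x hx => by rw [abs_le]; exact ⟨by linarith [hx.1], hx.2⟩)
  have hsq : Integrable (fun x : ℝ => x^2) P := by
    refine intOfBdd P hae (by fun_prop) (C := 1) (fun x hx => ?_)
    rw [abs_le]
    constructor <;> nlinarith [hx.1, hx.2]
  have hf1 : (fun x => (T1 x)^2) = fun x : ℝ => x^2/9 := by
    funext x; simp only [T1]; ring
  have hf2 : (fun x => (T2 x)^2) = fun x : ℝ => x^2/9 + (4/9)*x + 4/9 := by
    funext x; simp only [T2]; ring
  have h1 : Integrable (fun x => (T1 x)^2) P := by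
    rw [hf1]; exact hsq.div_const 9
  have h2 : Integrable (fun x => (T2 x)^2) P := by
    rw [hf2]
    exact ((hsq.div_const 9).add (hid.const_mul _)).add (integrable_const _)
  have e := transfer P hP (f := fun x => x^2) (by fun_prop) h1 h2
  have eT1 : ∫ x, (T1 x)^2 ∂P = (∫ x, x^2 ∂P) / 9 := by
    rw [hf1, integral_div]
  have eT2 : ∫ x, (T2 x)^2 ∂P = (∫ x, x^2 ∂P)/9 + (4/9)*(∫ x, x ∂P) + 4/9 := by
    have ha : Integrable (fun x : ℝ => x^2/9 + (4/9)*x) P := by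
      exact (hsq.div_const 9).add (hid.const_mul _)
    have hb : Integrable (fun x : ℝ => (4/9)*x) P := hid.const_mul _
    rw [hf2, integral_add ha (integrable_const _),
        integral_add (hsq.div_const 9) hb, integral_div, integral_const_mul,
        integral_const]
    simp
  rw [eT1, eT2, moment1 P hP hae] at e
  linarith


theorem optimal_one_point (P : Measure ℝ) [IsProbabilityMeasure P]
    (hP : P = (1 / 2 : ℝ≥0∞) • P.map T1 + (1 / 2 : ℝ≥0∞) • P.map T2) :
    (∫ x, rho x (1 / 2, 1) ∂P) = 9 / 8 ∧
      ∀ a ∈ Icc (0 : ℝ) 1, 9 / 8 ≤ ∫ x, rho x (a, 1) ∂P := by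
  have hae := aeUnit P hP
  have hid : Integrable (fun x : ℝ => x) P :=
    intOfBdd P hae measurable_id (C := 1)
      (fun x hx => by rw [abs_le]; exact ⟨by linarith [hx.1], hx.2⟩)
  have hsq : Integrable (fun x : ℝ => x^2) P := by
    refine intOfBdd P hae (by fun_prop) (C := 1) (fun x hx => ?_)
    rw [abs_le]
    constructor <;> nlinarith [hx.1, hx.2]
  have key : ∀ a : ℝ, (∫ x, rho x (a, 1) ∂P) = (a - 1/2)^2 + 9/8 := by
    intro a
    have hfa : (fun x => rho x (a,1)) = fun x : ℝ => x^2 - (2*a)*x + (a^2+1) := by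
      funext x; simp only [rho]; ring
    have hb : Integrable (fun x : ℝ => (2*a)*x) P := hid.const_mul _
    have hsa : Integrable (fun x : ℝ => x^2 - (2*a)*x) P := hsq.sub hb
    rw [hfa, integral_add hsa (integrable_const _), integral_sub hsq hb,
        integral_const_mul, integral_const, moment1 P hP hae, moment2 P hP hae]
    simp
    ring
  constructor
  · rw [key (1/2)]; norm_num
  · intro a _
    rw [key a]
    nlinarith [sq_nonneg (a - 1/2)]
end
end

section
/- Let P be the canonical probability measure on the Cantor set, n ≥ 2, and let ℓ(n) be the unique natural number with 2^{ℓ(n)} ≤ n < 2^{ℓ(n)+1}. For I ⊂ {1,2}^{ℓ(n)} with card(I) = n - 2^{ℓ(n)}, let α_n(I) = {(a(σ), 1/n) : σ ∈ {1,2}^{ℓ(n)} \ I} ∪ {(a(σ1), 1/n) : σ ∈ I} ∪ {(a(σ2), 1/n) : σ ∈ I}, where a(σ) = T_σ(1/2). Then the distortion error ∫ min_{a ∈ α_n(I)} ρ(x,a) dP(x) equals (1/18^{ℓ(n)}) · (1/8) · (2^{ℓ(n)+1} - n + (n - 2^{ℓ(n)})/9) + 1/n². -/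
open MeasureTheory Real Set Filter
open scoped ENNReal Topology

noncomputable section

/-!
Every point of `α_n(I)` sits at height `1/n`, so the distortion is `1/n²` plus
`∫ q_A dP`, where `q_A x = min_{a ∈ A} (x - a)²` and `A` is the set of first coordinates.
`P` lives on `[0,1]`, since the mass outside `[-t, 1+t]` is at most the mass outside
`[-3t, 1+3t]`. The cells `[0,1/3]` and `[2/3,1]` are `1/3` apart, so for `A, B ⊆ [0,1]` a point of
`T_i[0,1]` is nearest to `T_i(A)` resp. `T_i(B)`; self-similarity then gives
`∫ q_{T₁(A) ∪ T₂(B)} dP = (∫ q_A dP + ∫ q_B dP) / 18`. Iterating `ℓ` times, each cell `J_σ`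
contributes `18^{-ℓ}` times the error of its points pulled back to `[0,1]`: `V = 1/8` for the
single centre `1/2`, and `V/9` for the two centres `1/6, 5/6`.
-/

def minSqDist (s : Finset ℝ) (x : ℝ) : ℝ :=
  if h : s.Nonempty then s.inf' h fun a => (x - a) ^ 2 else 0

section MinSqDist

variable {s : Finset ℝ}

lemma minSqDist_eq (h : s.Nonempty) (x : ℝ) :
    minSqDist s x = s.inf' h fun a => (x - a) ^ 2 :=
  dif_pos h

lemma minSqDist_singleton (a x : ℝ) : minSqDist {a} x = (x - a) ^ 2 := by
  rw [minSqDist_eq (Finset.singleton_nonempty a), Finset.inf'_singleton]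

lemma continuous_minSqDist (h : s.Nonempty) : Continuous (minSqDist s) := by
  simp only [funext (minSqDist_eq h)]
  exact Continuous.finset_inf'_apply h fun a _ => by fun_prop

lemma minSqDist_le_one (h : s.Nonempty) (hs : ↑s ⊆ Icc (0 : ℝ) 1) {x : ℝ}
    (hx : x ∈ Icc (0 : ℝ) 1) : minSqDist s x ≤ 1 := by
  obtain ⟨a, ha⟩ := h
  obtain ⟨ha₀, ha₁⟩ := hs ha
  rw [minSqDist_eq ⟨a, ha⟩]
  refine (Finset.inf'_le _ ha).trans ?_
  nlinarith [hx.1, hx.2]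

lemma minSqDist_biUnion {ι : Type*} [DecidableEq ι] {t : Finset ι} (ht : t.Nonempty)
    {f : ι → Finset ℝ} (hf : ∀ i, (f i).Nonempty) (x : ℝ) :
    minSqDist (t.biUnion f) x = t.inf' ht fun i => minSqDist (f i) x := by
  rw [minSqDist_eq (ht.biUnion fun i _ => hf i), Finset.inf'_biUnion _ ht hf]
  simp only [minSqDist_eq (hf _)]

end MinSqDist

@[simp]
lemma Tm_zero (x : ℝ) : Tm 0 x = x / 3 := rfl

@[simp]
lemma Tm_one (x : ℝ) : Tm 1 x = x / 3 + 2 / 3 := rfl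

lemma continuous_Tm (i : Fin 2) : Continuous (Tm i) := by
  fin_cases i
  exacts [continuous_id.div_const 3, (continuous_id.div_const 3).add continuous_const]

lemma Tm_sub_Tm (i : Fin 2) (x a : ℝ) : Tm i x - Tm i a = (x - a) / 3 := by
  fin_cases i <;> simp <;> ring

lemma Tm_mem_Icc (i : Fin 2) {x : ℝ} (hx : x ∈ Icc (0 : ℝ) 1) :
    Tm i x ∈ Icc (0 : ℝ) 1 := by
  obtain ⟨hx₀, hx₁⟩ := hx
  fin_cases i <;> simp <;> constructor <;> linarith

lemma one_ninth_le_sq_Tm_sub_Tm {i j : Fin 2} (hij : i ≠ j) {x a : ℝ}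
    (hx : x ∈ Icc (0 : ℝ) 1) (ha : a ∈ Icc (0 : ℝ) 1) :
    1 / 9 ≤ (Tm j x - Tm i a) ^ 2 := by
  obtain ⟨hx₀, hx₁⟩ := hx
  obtain ⟨ha₀, ha₁⟩ := ha
  fin_cases i <;> fin_cases j <;> simp_all <;> nlinarith

lemma minSqDist_image_Tm {s : Finset ℝ} (h : s.Nonempty) (i : Fin 2) (x : ℝ) :
    minSqDist (s.image (Tm i)) (Tm i x) = minSqDist s x / 9 := by
  rw [minSqDist_eq (h.image _), Finset.inf'_image, minSqDist_eq h,
    Finset.apply_inf'_eq_inf'_comp h (· / 9) fun a b => (min_div_div_right (by norm_num) a b).symm]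
  congr 1
  ext a
  simp only [Function.comp_apply, Tm_sub_Tm]
  ring

lemma minSqDist_biUnion_image_Tm {B : Fin 2 → Finset ℝ} (hB : ∀ i, (B i).Nonempty)
    (hBI : ∀ i, ↑(B i) ⊆ Icc (0 : ℝ) 1) (j : Fin 2) {x : ℝ} (hx : x ∈ Icc (0 : ℝ) 1) :
    minSqDist (Finset.univ.biUnion fun i => (B i).image (Tm i)) (Tm j x) =
      minSqDist (B j) x / 9 := by
  rw [minSqDist_biUnion Finset.univ_nonempty fun i => (hB i).image _]
  refine le_antisymm ((Finset.inf'_le _ (Finset.mem_univ j)).trans_eq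
    (minSqDist_image_Tm (hB j) j x)) (Finset.le_inf' _ _ fun i _ => ?_)
  obtain rfl | hij := eq_or_ne i j
  · exact (minSqDist_image_Tm (hB i) i x).ge
  · rw [minSqDist_eq ((hB i).image _)]
    refine Finset.le_inf' _ _ fun b hb => ?_
    obtain ⟨a, ha, rfl⟩ := Finset.mem_image.mp hb
    have := minSqDist_le_one (hB j) (hBI j) hx
    linarith [one_ninth_le_sq_Tm_sub_Tm hij hx (hBI i ha)]

@[simp]
lemma Tw_nil : Tw [] = id := rfl

@[simp]
lemma Tw_cons (i : Fin 2) (l : List (Fin 2)) (x : ℝ) : Tw (i :: l) x = Tm i (Tw l x) := rfl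

lemma Tw_mem_Icc (l : List (Fin 2)) {x : ℝ} (hx : x ∈ Icc (0 : ℝ) 1) :
    Tw l x ∈ Icc (0 : ℝ) 1 := by
  induction l with
  | nil => exact hx
  | cons i l ih => exact Tm_mem_Icc i ih

lemma Fin.sum_pi_succ {M : Type*} [AddCommMonoid M] {ℓ : ℕ} {α : Type*} [Fintype α]
    (f : (Fin (ℓ + 1) → α) → M) : ∑ σ, f σ = ∑ i, ∑ τ, f (Fin.cons i τ) := by
  rw [← (Fin.consEquiv fun _ => α).sum_comp, Fintype.sum_prod_type]
  rfl

lemma Finset.sum_ite_mem_univ {α M : Type*} [Fintype α] [DecidableEq α] [CommRing M]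
    (I : Finset α) (a b : M) :
    ∑ x, (if x ∈ I then a else b) = I.card * a + (Fintype.card α - I.card) * b := by
  have hsplit := Finset.card_filter_add_card_filter_not (s := Finset.univ) (· ∈ I)
  rw [Finset.filter_mem_eq_inter, Finset.univ_inter, Finset.card_univ] at hsplit
  rw [Finset.sum_ite, Finset.sum_const, Finset.sum_const, nsmul_eq_mul, nsmul_eq_mul,
    Finset.filter_mem_eq_inter, Finset.univ_inter, ← hsplit]
  push_cast
  ring

def cellPoints {ℓ : ℕ} (A : (Fin ℓ → Fin 2) → Finset ℝ) : Finset ℝ :=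
  Finset.univ.biUnion fun σ => (A σ).image (Tw (List.ofFn σ))

section CellPoints

variable {ℓ : ℕ} {A : (Fin ℓ → Fin 2) → Finset ℝ}

lemma cellPoints_nonempty (hA : ∀ σ, (A σ).Nonempty) : (cellPoints A).Nonempty :=
  Finset.univ_nonempty.biUnion fun σ _ => (hA σ).image _

lemma cellPoints_subset_Icc (hAI : ∀ σ, ↑(A σ) ⊆ Icc (0 : ℝ) 1) :
    ↑(cellPoints A) ⊆ Icc (0 : ℝ) 1 := by
  intro y hy
  simp only [cellPoints, Finset.coe_biUnion, Finset.coe_image, mem_iUnion] at hy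
  obtain ⟨σ, -, a, ha, rfl⟩ := hy
  exact Tw_mem_Icc _ (hAI σ ha)

lemma cellPoints_zero (A : (Fin 0 → Fin 2) → Finset ℝ) : cellPoints A = A default := by
  simp only [cellPoints, Finset.univ_unique, Finset.singleton_biUnion, List.ofFn_zero, Tw_nil,
    Finset.image_id]
  exact congrArg A (Subsingleton.elim _ _)

lemma cellPoints_succ (A : (Fin (ℓ + 1) → Fin 2) → Finset ℝ) :
    cellPoints A =
      Finset.univ.biUnion fun i => (cellPoints fun τ => A (Fin.cons i τ)).image (Tm i) := by
  ext y
  simp [cellPoints, Fin.exists_fin_succ_pi]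

end CellPoints

-- `Tw (List.ofFn σ)` sends these to `a(σ)`, resp. to `a(σ1)` and `a(σ2)`.
def cellCentres {ℓ : ℕ} (I : Finset (Fin ℓ → Fin 2)) (σ : Fin ℓ → Fin 2) :
    Finset ℝ :=
  if σ ∈ I then {T1 (1 / 2), T2 (1 / 2)} else {1 / 2}

section CellCentres

variable {ℓ : ℕ} (I : Finset (Fin ℓ → Fin 2))

lemma cellCentres_nonempty (σ : Fin ℓ → Fin 2) : (cellCentres I σ).Nonempty := by
  unfold cellCentres
  split_ifs <;> simp

lemma cellCentres_subset_Icc (σ : Fin ℓ → Fin 2) :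
    ↑(cellCentres I σ) ⊆ Icc (0 : ℝ) 1 := by
  unfold cellCentres
  split_ifs <;> norm_num [insert_subset_iff, T1, T2]

lemma coe_image_cellPoints_cellCentres (c : ℝ) :
    (fun σ => (Tw (List.ofFn σ) (1 / 2), c)) '' (Set.univ \ (↑I : Set (Fin ℓ → Fin 2))) ∪
        (fun σ => (Tw (List.ofFn σ) (T1 (1 / 2)), c)) '' (↑I : Set (Fin ℓ → Fin 2)) ∪
        (fun σ => (Tw (List.ofFn σ) (T2 (1 / 2)), c)) '' (↑I : Set (Fin ℓ → Fin 2)) =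
      ↑((cellPoints (cellCentres I)).image fun a => (a, c)) := by
  ext p
  simp only [cellPoints, cellCentres, Finset.coe_image, Finset.coe_biUnion, Finset.mem_coe,
    Finset.mem_univ, iUnion_true, apply_ite, Finset.coe_insert, Finset.coe_singleton,
    image_insert_eq, image_singleton, image_iUnion, mem_iUnion, mem_union, mem_image, Set.mem_sdiff,
    mem_univ, true_and]
  constructor
  · rintro ((⟨σ, hσ, rfl⟩ | ⟨σ, hσ, rfl⟩) | ⟨σ, hσ, rfl⟩) <;>
      exact ⟨σ, by simp [hσ]⟩
  · rintro ⟨σ, hp⟩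
    by_cases hσ : σ ∈ I
    · simp only [hσ, if_true, mem_insert_iff, mem_singleton_iff] at hp
      rcases hp with rfl | rfl
      exacts [Or.inl (Or.inr ⟨σ, hσ, rfl⟩), Or.inr ⟨σ, hσ, rfl⟩]
    · simp only [hσ, if_false, mem_singleton_iff] at hp
      exact Or.inl (Or.inl ⟨σ, hσ, hp.symm⟩)

end CellCentres

lemma Finset.ciInf_coe_eq_inf' {α β : Type*} [ConditionallyCompleteLinearOrder α] (s : Finset β)
    (h : s.Nonempty) (f : β → α) :
    ⨅ b : (↑s : Set β), f b = s.inf' h f := by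
  rw [Finset.inf'_eq_csInf_image, iInf]
  congr 1
  ext y
  simp [Set.range]

lemma distortion_coe_image_prodMk {P : Measure ℝ} [IsProbabilityMeasure P] {s : Finset ℝ}
    (hs : s.Nonempty) (hint : Integrable (minSqDist s) P) (c : ℝ) :
    distortion P ↑(s.image fun a => (a, c)) = ∫ x, minSqDist s x ∂P + c ^ 2 := by
  have hpt : ∀ x, ⨅ p : (↑(s.image fun a => (a, c)) : Set (ℝ × ℝ)), rho x p =
      minSqDist s x + c ^ 2 := fun x => by
    rw [Finset.ciInf_coe_eq_inf' _ (hs.image _), Finset.inf'_image, minSqDist_eq hs,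
      Finset.apply_inf'_eq_inf'_comp hs (· + c ^ 2) fun a b => (min_add_add_right a b _).symm]
    rfl
  simp only [distortion, hpt]
  rw [integral_add hint (integrable_const _), integral_const, probReal_univ, one_smul]

section SelfSimilar

variable (P : Measure ℝ)
  (hP : P = (1 / 2 : ℝ≥0∞) • P.map T1 + (1 / 2 : ℝ≥0∞) • P.map T2)
include hP

lemma measure_eq_half_sum_preimage {A : Set ℝ} (hA : MeasurableSet A) :
    P A = 2⁻¹ * ∑ i, P (Tm i ⁻¹' A) := by
  conv_lhs => rw [hP]
  rw [Measure.add_apply, Measure.smul_apply, Measure.smul_apply,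
    Measure.map_apply (f := T1) (continuous_Tm 0).measurable hA,
    Measure.map_apply (f := T2) (continuous_Tm 1).measurable hA, Fin.sum_univ_two]
  simp only [smul_eq_mul, one_div, mul_add]
  rfl

lemma measure_compl_Icc_le (t : ℝ) :
    P (Icc (-t) (1 + t))ᶜ ≤ P (Icc (-(3 * t)) (1 + 3 * t))ᶜ := by
  have hpre : ∀ i, Tm i ⁻¹' (Icc (-t) (1 + t))ᶜ ⊆ (Icc (-(3 * t)) (1 + 3 * t))ᶜ := by
    intro i x hx hx'
    obtain ⟨hx₀, hx₁⟩ := hx'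
    refine hx ⟨?_, ?_⟩ <;> fin_cases i <;> simp <;> linarith
  calc P (Icc (-t) (1 + t))ᶜ = 2⁻¹ * ∑ i, P (Tm i ⁻¹' (Icc (-t) (1 + t))ᶜ) :=
        measure_eq_half_sum_preimage P hP measurableSet_Icc.compl
    _ ≤ 2⁻¹ * ∑ _i : Fin 2, P (Icc (-(3 * t)) (1 + 3 * t))ᶜ := by
        gcongr with i
        exact hpre i
    _ = P (Icc (-(3 * t)) (1 + 3 * t))ᶜ := by
        rw [Finset.sum_const, Finset.card_univ, Fintype.card_fin, nsmul_eq_mul, Nat.cast_ofNat,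
          ← mul_assoc, ENNReal.inv_mul_cancel two_ne_zero ENNReal.ofNat_ne_top, one_mul]

variable [IsProbabilityMeasure P]

lemma measure_compl_Icc_eq_zero {t : ℝ} (ht : 0 < t) : P (Icc (-t) (1 + t))ᶜ = 0 := by
  let U : ℕ → Set ℝ := fun k => (Icc (-(3 ^ k * t)) (1 + 3 ^ k * t))ᶜ
  have hle : ∀ k, P (U 0) ≤ P (U k) := by
    intro k
    induction k with
    | zero => rfl
    | succ k ih =>
      refine ih.trans ?_
      simpa only [U, pow_succ', mul_assoc] using measure_compl_Icc_le P hP (3 ^ k * t)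
  have hanti : Antitone U := fun k m hkm => by
    have : (3 : ℝ) ^ k * t ≤ 3 ^ m * t := by gcongr; norm_num
    exact compl_subset_compl.mpr (Icc_subset_Icc (by linarith) (by linarith))
  have hempty : ⋂ k, U k = ∅ := by
    refine eq_empty_of_forall_notMem fun x hx => ?_
    obtain ⟨k, hk⟩ := pow_unbounded_of_one_lt ((|x| + 1) / t) (by norm_num : (1 : ℝ) < 3)
    rw [div_lt_iff₀ ht] at hk
    exact mem_iInter.mp hx k ⟨by linarith [neg_abs_le x], by linarith [le_abs_self x]⟩
  have hlim : Tendsto (P ∘ U) atTop (𝓝 (P (⋂ k, U k))) := tendsto_measure_iInter_atTop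
    (fun k => measurableSet_Icc.compl.nullMeasurableSet) hanti ⟨0, measure_ne_top P _⟩
  rw [hempty, measure_empty] at hlim
  simpa [U] using le_antisymm (ge_of_tendsto' hlim hle) bot_le

lemma ae_mem_Icc : ∀ᵐ x ∂P, x ∈ Icc (0 : ℝ) 1 := by
  have hk : ∀ k : ℕ, ∀ᵐ x ∂P, x ∈ Icc (-(1 / (k + 1) : ℝ)) (1 + 1 / (k + 1)) :=
    fun k => mem_ae_iff.mpr (measure_compl_Icc_eq_zero P hP Nat.one_div_pos_of_nat)
  filter_upwards [ae_all_iff.mpr hk] with x hx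
  have hlim : Tendsto (fun k : ℕ => 1 / ((k : ℝ) + 1)) atTop (𝓝 0) :=
    tendsto_one_div_add_atTop_nhds_zero_nat
  exact ⟨le_of_tendsto' (by simpa using hlim.neg) fun k => (hx k).1,
    ge_of_tendsto' (by simpa using hlim.const_add 1) fun k => (hx k).2⟩

lemma integrable_of_continuous {g : ℝ → ℝ} (hg : Continuous g) : Integrable g P := by
  rw [← Measure.restrict_eq_self_of_ae_mem (ae_mem_Icc P hP)]
  exact hg.continuousOn.integrableOn_compact isCompact_Icc

lemma integral_eq_half_integral_sum {g : ℝ → ℝ} (hg : Continuous g) :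
    ∫ x, g x ∂P = 2⁻¹ * ∫ x, ∑ i, g (Tm i x) ∂P := by
  have hint : ∀ i, Integrable (fun x => g (Tm i x)) P :=
    fun i => integrable_of_continuous P hP (hg.comp (continuous_Tm i))
  have hmap : ∀ i, Integrable g (P.map (Tm i)) := fun i => by
    rw [integrable_map_measure hg.aestronglyMeasurable (continuous_Tm i).aemeasurable]
    exact hint i
  conv_lhs => rw [hP]
  change ∫ x, g x ∂((1 / 2 : ℝ≥0∞) • P.map (Tm 0) + (1 / 2 : ℝ≥0∞) • P.map (Tm 1)) =
    _
  rw [integral_add_measure ((hmap 0).smul_measure (by simp)) ((hmap 1).smul_measure (by simp)),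
    integral_smul_measure, integral_smul_measure,
    integral_map (continuous_Tm 0).aemeasurable hg.aestronglyMeasurable,
    integral_map (continuous_Tm 1).aemeasurable hg.aestronglyMeasurable,
    integral_finsetSum _ fun i _ => hint i, Fin.sum_univ_two]
  simp [mul_add]

lemma integral_sq_sub_half : ∫ x, (x - 1 / 2) ^ 2 ∂P = 1 / 8 := by
  have hsum : ∀ x : ℝ, ∑ i, (Tm i x - 1 / 2) ^ 2 = 2 / 9 * (x - 1 / 2) ^ 2 + 2 / 9 :=
      fun x => by
    simp only [Fin.sum_univ_two, Tm_zero, Tm_one]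
    ring
  have h := integral_eq_half_integral_sum P hP (g := fun x => (x - 1 / 2) ^ 2) (by fun_prop)
  simp only [hsum] at h
  rw [integral_add (integrable_of_continuous P hP (by fun_prop)) (integrable_const _),
    integral_const_mul, integral_const, probReal_univ, one_smul] at h
  linarith

lemma integral_minSqDist_biUnion_image_Tm {B : Fin 2 → Finset ℝ} (hB : ∀ i, (B i).Nonempty)
    (hBI : ∀ i, ↑(B i) ⊆ Icc (0 : ℝ) 1) :
    ∫ x, minSqDist (Finset.univ.biUnion fun i => (B i).image (Tm i)) x ∂P =
      1 / 18 * ∑ i, ∫ x, minSqDist (B i) x ∂P := by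
  set C := Finset.univ.biUnion fun i => (B i).image (Tm i)
  have hne : C.Nonempty := Finset.univ_nonempty.biUnion fun i _ => (hB i).image _
  have hbranch : ∀ᵐ x ∂P, ∑ i, minSqDist C (Tm i x) = ∑ i, minSqDist (B i) x / 9 := by
    filter_upwards [ae_mem_Icc P hP] with x hx
    exact Finset.sum_congr rfl fun j _ => minSqDist_biUnion_image_Tm hB hBI j hx
  have hint : ∀ i, Integrable (fun x => minSqDist (B i) x / 9) P := fun i =>
    (integrable_of_continuous P hP (continuous_minSqDist (hB i))).div_const 9
  rw [integral_eq_half_integral_sum P hP (continuous_minSqDist hne), integral_congr_ae hbranch,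
    integral_finsetSum _ fun i _ => hint i]
  simp only [integral_div, ← Finset.sum_div]
  ring

lemma integral_minSqDist_cellPoints {ℓ : ℕ} (A : (Fin ℓ → Fin 2) → Finset ℝ)
    (hA : ∀ σ, (A σ).Nonempty) (hAI : ∀ σ, ↑(A σ) ⊆ Icc (0 : ℝ) 1) :
    ∫ x, minSqDist (cellPoints A) x ∂P = (1 / 18) ^ ℓ * ∑ σ, ∫ x, minSqDist (A σ) x ∂P := by
  induction ℓ with
  | zero => rw [cellPoints_zero, Fintype.sum_subsingleton _ default, pow_zero, one_mul]
  | succ ℓ ih =>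
    rw [cellPoints_succ, integral_minSqDist_biUnion_image_Tm P hP
      (fun i => cellPoints_nonempty fun τ => hA _) (fun i => cellPoints_subset_Icc fun τ => hAI _)]
    simp only [ih _ (fun τ => hA _) (fun τ => hAI _)]
    rw [Fin.sum_pi_succ, Fin.sum_univ_two, Fin.sum_univ_two, pow_succ]
    ring

lemma integral_minSqDist_cellCentres {ℓ : ℕ} (I : Finset (Fin ℓ → Fin 2))
    (σ : Fin ℓ → Fin 2) :
    ∫ x, minSqDist (cellCentres I σ) x ∂P = if σ ∈ I then 1 / 72 else 1 / 8 := by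
  have hcentre : ∫ x, minSqDist {1 / 2} x ∂P = 1 / 8 := by
    simpa only [minSqDist_singleton] using integral_sq_sub_half P hP
  have hchildren : ({T1 (1 / 2), T2 (1 / 2)} : Finset ℝ) =
      Finset.univ.biUnion fun i => ({1 / 2} : Finset ℝ).image (Tm i) := by
    ext; simp [Fin.exists_fin_two, T1, T2]
  unfold cellCentres
  split_ifs
  · rw [hchildren, integral_minSqDist_biUnion_image_Tm P hP (fun _ => Finset.singleton_nonempty _)
      (fun _ => by norm_num), Fin.sum_univ_two, hcentre]
    norm_num
  · exact hcentre

end SelfSimilar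

theorem distortion_alpha_n_general (P : Measure ℝ) [IsProbabilityMeasure P]
    (hP : P = (1 / 2 : ℝ≥0∞) • P.map T1 + (1 / 2 : ℝ≥0∞) • P.map T2)
    (n ℓ : ℕ) (h1 : 2 ^ ℓ ≤ n)
    (I : Finset (Fin ℓ → Fin 2)) (hI : I.card = n - 2 ^ ℓ) :
    distortion P
      ((fun σ => (Tw (List.ofFn σ) (1 / 2), (1 / n : ℝ))) '' (Set.univ \ (↑I : Set (Fin ℓ → Fin 2))) ∪
        (fun σ => (Tw (List.ofFn σ) (T1 (1 / 2)), (1 / n : ℝ))) '' (↑I : Set (Fin ℓ → Fin 2)) ∪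
        (fun σ => (Tw (List.ofFn σ) (T2 (1 / 2)), (1 / n : ℝ))) '' (↑I : Set (Fin ℓ → Fin 2))) =
      (1 / 18 ^ ℓ) * (1 / 8) * (2 ^ (ℓ + 1) - (n : ℝ) + ((n : ℝ) - 2 ^ ℓ) / 9) +
        1 / (n : ℝ) ^ 2 := by
  have hne := cellPoints_nonempty (cellCentres_nonempty I)
  have hcard : (I.card : ℝ) = n - 2 ^ ℓ := by
    rw [hI, Nat.cast_sub h1]
    push_cast
    ring
  rw [coe_image_cellPoints_cellCentres, distortion_coe_image_prodMk hne
      (integrable_of_continuous P hP (continuous_minSqDist hne)),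
    integral_minSqDist_cellPoints P hP _ (cellCentres_nonempty I) (cellCentres_subset_Icc I)]
  simp only [integral_minSqDist_cellCentres P hP, Finset.sum_ite_mem_univ, Fintype.card_fun,
    Fintype.card_fin, Nat.cast_pow, Nat.cast_ofNat]
  rw [hcard, one_div_pow, one_div_pow]
  ring

theorem distortion_alpha_n (P : Measure ℝ) [IsProbabilityMeasure P]
    (hP : P = (1 / 2 : ℝ≥0∞) • P.map T1 + (1 / 2 : ℝ≥0∞) • P.map T2)
    (n ℓ : ℕ) (hn : 2 ≤ n) (h1 : 2 ^ ℓ ≤ n) (h2 : n < 2 ^ (ℓ + 1))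
    (I : Finset (Fin ℓ → Fin 2)) (hI : I.card = n - 2 ^ ℓ) :
    distortion P
      ((fun σ => (Tw (List.ofFn σ) (1 / 2), (1 / n : ℝ))) '' (Set.univ \ (↑I : Set (Fin ℓ → Fin 2))) ∪
        (fun σ => (Tw (List.ofFn σ) (T1 (1 / 2)), (1 / n : ℝ))) '' (↑I : Set (Fin ℓ → Fin 2)) ∪
        (fun σ => (Tw (List.ofFn σ) (T2 (1 / 2)), (1 / n : ℝ))) '' (↑I : Set (Fin ℓ → Fin 2))) =
      (1 / 18 ^ ℓ) * (1 / 8) * (2 ^ (ℓ + 1) - (n : ℝ) + ((n : ℝ) - 2 ^ ℓ) / 9) +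
        1 / (n : ℝ) ^ 2 :=
  distortion_alpha_n_general P hP n ℓ h1 I hI
end
end

section
/- Define V_n = (1/18^{ℓ(n)}) · (1/8) · (2^{ℓ(n)+1} - n + (n - 2^{ℓ(n)})/9) + 1/n² for n ≥ 2, where ℓ(n) is the unique natural number with 2^{ℓ(n)} ≤ n < 2^{ℓ(n)+1}. Then lim_{n→∞} V_n = 0 and lim_{n→∞} (2 log n)/(-log V_n) = 1. -/
open MeasureTheory Real Set Filter
open scoped ENNReal Topology

noncomputable section

/-!
Writing `p = 2 ^ ℓ(n)`, so that `p ≤ n < 2p`, the first summand of `V_n` is at most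
`p / (8 · 18^ℓ(n)) ≤ 1 / (8 p²) ≤ 1 / (2 n²)` because `18^ℓ ≥ 8^ℓ = p³`. Hence
`1 ≤ n² V_n ≤ 3/2`, so `-log V_n = 2 log n + O(1)`, which gives both limits.
-/

theorem tendsto_zero_of_mul_rpow_le {V : ℕ → ℝ} {a c C : ℝ} (ha : 0 < a) (hc : 0 ≤ c)
    (hV : ∀ᶠ n : ℕ in atTop, c ≤ V n * (n : ℝ) ^ a ∧ V n * (n : ℝ) ^ a ≤ C) :
    Tendsto V atTop (𝓝 0) := by
  have hbound : Tendsto (fun n : ℕ => C * (n : ℝ) ^ (-a)) atTop (𝓝 0) := by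
    simpa using ((tendsto_rpow_neg_atTop ha).comp tendsto_natCast_atTop_atTop).const_mul C
  have hsandwich : ∀ᶠ n : ℕ in atTop, 0 ≤ V n ∧ V n ≤ C * (n : ℝ) ^ (-a) := by
    filter_upwards [hV, eventually_gt_atTop 0] with n hn hn0
    have hpow : 0 < (n : ℝ) ^ a := by positivity
    rw [rpow_neg (Nat.cast_nonneg n), ← div_eq_mul_inv, le_div_iff₀ hpow]
    exact ⟨(mul_nonneg_iff_of_pos_right hpow).1 (hc.trans hn.1), hn.2⟩
  exact tendsto_of_tendsto_of_tendsto_of_le_of_le' tendsto_const_nhds hbound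
    (hsandwich.mono fun _ => And.left) (hsandwich.mono fun _ => And.right)

theorem tendsto_mul_log_div_neg_log_of_mul_rpow_bounded {V : ℕ → ℝ} {a c C : ℝ} (ha : a ≠ 0)
    (hc : 0 < c) (hV : ∀ᶠ n : ℕ in atTop, c ≤ V n * (n : ℝ) ^ a ∧ V n * (n : ℝ) ^ a ≤ C) :
    Tendsto (fun n : ℕ => a * log n / -log (V n)) atTop (𝓝 1) := by
  set g : ℕ → ℝ := fun n => V n * (n : ℝ) ^ a
  have hlog_g : Tendsto (fun n : ℕ => log (g n) / log n) atTop (𝓝 0) := by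
    refine tendsto_bdd_div_atTop_nhds_zero (b := log c) (B := log C) ?_ ?_
      (tendsto_log_atTop.comp tendsto_natCast_atTop_atTop)
    · filter_upwards [hV] with n hn using log_le_log hc hn.1
    · filter_upwards [hV] with n hn using log_le_log (hc.trans_le hn.1) hn.2
  have hlim : Tendsto (fun n : ℕ => 1 / (1 - log (g n) / log n / a)) atTop (𝓝 1) := by
    simpa using ((hlog_g.div_const a).const_sub 1).inv₀ (by norm_num)
  refine hlim.congr' ?_
  filter_upwards [hV, eventually_gt_atTop 1] with n hn hn1
  have hlogn : 0 < log n := log_pos (by exact_mod_cast hn1)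
  have hVn : V n ≠ 0 := by
    rintro h
    simp only [h, zero_mul] at hn
    linarith [hn.1]
  have hlog_V : log (g n) = log (V n) + a * log n := by
    rw [log_mul hVn (by positivity), log_rpow (by positivity)]
  conv_rhs => rw [← one_div_div]
  rw [hlog_V]
  congr 1
  field_simp
  ring

def cantorTerm (ℓ : ℕ) (x : ℝ) : ℝ := (1 / 18 ^ ℓ) * (1 / 8) * (2 ^ (ℓ + 1) - x + (x - 2 ^ ℓ) / 9)

theorem cantorTerm_nonneg {ℓ : ℕ} {x : ℝ} (hx : x ≤ 2 ^ (ℓ + 1)) : 0 ≤ cantorTerm ℓ x := by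
  have hB : 0 ≤ 2 ^ (ℓ + 1) - x + (x - 2 ^ ℓ) / 9 := by
    rw [pow_succ] at hx ⊢
    linarith [pow_pos (two_pos : (0 : ℝ) < 2) ℓ]
  unfold cantorTerm
  positivity

theorem cantorTerm_mul_sq_le {ℓ : ℕ} {x : ℝ} (hlo : 2 ^ ℓ ≤ x) (hhi : x ≤ 2 ^ (ℓ + 1)) :
    cantorTerm ℓ x * x ^ 2 ≤ 1 / 2 := by
  set p : ℝ := 2 ^ ℓ with hp
  have hp0 : 0 < p := by positivity
  rw [pow_succ, ← hp] at hhi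
  have hcube : p ^ 3 ≤ 18 ^ ℓ := by
    rw [hp, ← pow_mul, mul_comm, pow_mul]
    exact pow_le_pow_left₀ (by norm_num) (by norm_num) ℓ
  have hB0 : 0 ≤ 2 * p - x + (x - p) / 9 := by linarith
  have hBp : 2 * p - x + (x - p) / 9 ≤ p := by linarith
  set B : ℝ := 2 * p - x + (x - p) / 9
  unfold cantorTerm
  rw [pow_succ, ← hp, show 1 / 18 ^ ℓ * (1 / 8) * (p * 2 - x + (x - p) / 9) * x ^ 2
      = B * x ^ 2 / (8 * 18 ^ ℓ) by ring, div_le_iff₀ (by positivity)]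
  calc B * x ^ 2 ≤ p * (2 * p) ^ 2 := by gcongr <;> linarith
    _ = 4 * p ^ 3 := by ring
    _ ≤ 1 / 2 * (8 * 18 ^ ℓ) := by linarith

theorem constrained_dimension_one (L : ℕ → ℕ)
    (hL : ∀ n, 2 ≤ n → 2 ^ L n ≤ n ∧ n < 2 ^ (L n + 1)) (V : ℕ → ℝ)
    (hV : ∀ n, 2 ≤ n → V n =
      (1 / 18 ^ L n) * (1 / 8) * (2 ^ (L n + 1) - (n : ℝ) + ((n : ℝ) - 2 ^ L n) / 9) +
        1 / (n : ℝ) ^ 2) :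
    Tendsto V atTop (𝓝 0) ∧
      Tendsto (fun n : ℕ => (2 * Real.log (n : ℝ)) / (-Real.log (V n))) atTop (𝓝 1) := by
  have hbounds : ∀ᶠ n : ℕ in atTop,
      1 ≤ V n * (n : ℝ) ^ (2 : ℝ) ∧ V n * (n : ℝ) ^ (2 : ℝ) ≤ 3 / 2 := by
    filter_upwards [eventually_ge_atTop 2] with n hn
    obtain ⟨hlo, hhi⟩ := hL n hn
    have hlo' : (2 : ℝ) ^ L n ≤ n := by exact_mod_cast hlo
    have hhi' : (n : ℝ) ≤ 2 ^ (L n + 1) := by exact_mod_cast hhi.le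
    have hn0 : (n : ℝ) ≠ 0 := by positivity
    have hVn : V n * (n : ℝ) ^ (2 : ℝ) = cantorTerm (L n) n * n ^ 2 + 1 := by
      rw [rpow_two, hV n hn, ← cantorTerm]
      field_simp
    have := cantorTerm_mul_sq_le hlo' hhi'
    have := mul_nonneg (cantorTerm_nonneg hhi') (sq_nonneg (n : ℝ))
    constructor <;> linarith
  exact ⟨tendsto_zero_of_mul_rpow_le two_pos zero_le_one hbounds,
    tendsto_mul_log_div_neg_log_of_mul_rpow_bounded two_ne_zero one_pos hbounds⟩
end
end

section
/- Define V_n = (1/18^{ℓ(n)}) · (1/8) · (2^{ℓ(n)+1} - n + (n - 2^{ℓ(n)})/9) + 1/n² for n ≥ 2, where 2^{ℓ(n)} ≤ n < 2^{ℓ(n)+1}. Then lim_{n→∞} n² V_n = 1. -/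
open MeasureTheory Real Set Filter
open scoped ENNReal Topology

noncomputable section

theorem constrained_coefficient_one (L : ℕ → ℕ)
    (hL : ∀ n, 2 ≤ n → 2 ^ L n ≤ n ∧ n < 2 ^ (L n + 1)) (V : ℕ → ℝ)
    (hV : ∀ n, 2 ≤ n → V n =
      (1 / 18 ^ L n) * (1 / 8) * (2 ^ (L n + 1) - (n : ℝ) + ((n : ℝ) - 2 ^ L n) / 9) +
        1 / (n : ℝ) ^ 2) :
    Tendsto (fun n : ℕ => (n : ℝ) ^ 2 * V n) atTop (𝓝 1) := by
  have hLtop : Tendsto L atTop atTop := by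
    rw [tendsto_atTop_atTop]
    intro b
    refine ⟨max 2 (2 ^ b), fun n hn => ?_⟩
    have h2 : 2 ≤ n := le_trans (le_max_left _ _) hn
    have hb : 2 ^ b ≤ n := le_trans (le_max_right _ _) hn
    have hlt : 2 ^ b < 2 ^ (L n + 1) := lt_of_le_of_lt hb (hL n h2).2
    have := (Nat.pow_lt_pow_iff_right (by norm_num : 1 < 2)).mp hlt
    omega
  set g : ℕ → ℝ := fun n => (n : ℝ) ^ 2 *
      ((1 / 18 ^ L n) * (1 / 8) * (2 ^ (L n + 1) - (n : ℝ) + ((n : ℝ) - 2 ^ L n) / 9)) with hg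
  have hbound : ∀ n, 2 ≤ n → 0 ≤ g n ∧ g n ≤ (1 / 2) * (4 / 9 : ℝ) ^ L n := by
    intro n hn
    obtain ⟨h1, h2⟩ := hL n hn
    have h1' : (2 : ℝ) ^ L n ≤ (n : ℝ) := by exact_mod_cast h1
    have h2' : (n : ℝ) < 2 ^ (L n + 1) := by exact_mod_cast h2
    have hps : (2 : ℝ) ^ (L n + 1) = 2 * 2 ^ L n := by ring
    have hpos : (0 : ℝ) < 2 ^ L n := by positivity
    have hBnn : 0 ≤ 2 ^ (L n + 1) - (n : ℝ) + ((n : ℝ) - 2 ^ L n) / 9 := by linarith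
    have hB : 2 ^ (L n + 1) - (n : ℝ) + ((n : ℝ) - 2 ^ L n) / 9 ≤ 2 ^ L n := by
      rw [hps]; linarith
    constructor
    · have hc : (0 : ℝ) ≤ (1 / 18 ^ L n) * (1 / 8) := by positivity
      exact mul_nonneg (by positivity) (mul_nonneg hc hBnn)
    · have hn0 : (0 : ℝ) ≤ (n : ℝ) := Nat.cast_nonneg n
      calc g n ≤ (2 * 2 ^ L n) ^ 2 * ((1 / 18 ^ L n) * (1 / 8) * (2 ^ L n)) := by
            apply mul_le_mul
            · apply pow_le_pow_left₀ hn0; rw [← hps]; exact h2'.le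
            · apply mul_le_mul_of_nonneg_left hB (by positivity)
            · exact mul_nonneg (by positivity) hBnn
            · positivity
        _ = (1 / 2) * (4 / 9 : ℝ) ^ L n := by
            have e1 : (18 : ℝ) ^ L n = 2 ^ L n * 9 ^ L n := by
              rw [← mul_pow]; norm_num
            have e2 : (4 / 9 : ℝ) ^ L n = (2 ^ L n) ^ 2 / 9 ^ L n := by
              rw [div_pow, ← pow_mul, mul_comm (L n) 2, pow_mul]; norm_num
            rw [e1, e2]
            have h9 : (0 : ℝ) < 9 ^ L n := by positivity
            field_simp
            ring
  have h0 : Tendsto (fun n => (1 / 2 : ℝ) * (4 / 9) ^ L n) atTop (𝓝 0) := by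
    have h := (tendsto_pow_atTop_nhds_zero_of_lt_one (by norm_num : (0:ℝ) ≤ 4/9)
      (by norm_num : (4/9 : ℝ) < 1)).comp hLtop
    simpa using h.const_mul (1 / 2 : ℝ)
  have hgto : Tendsto g atTop (𝓝 0) := by
    refine squeeze_zero' ?_ ?_ h0
    · filter_upwards [eventually_ge_atTop 2] with n hn using (hbound n hn).1
    · filter_upwards [eventually_ge_atTop 2] with n hn using (hbound n hn).2
  have hsum : Tendsto (fun n => g n + 1) atTop (𝓝 1) := by
    simpa using hgto.add (tendsto_const_nhds : Tendsto (fun _ : ℕ => (1 : ℝ)) atTop (𝓝 1))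
  refine hsum.congr' ?_
  filter_upwards [eventually_ge_atTop 2] with n hn
  have hn0 : (n : ℝ) ≠ 0 := by positivity
  rw [hV n hn, hg]
  field_simp
end
end

section
/- For n ≥ 2, let ℓ(n) satisfy 2^{ℓ(n)} ≤ n < 2^{ℓ(n)+1}. Then 0 ≤ n² · (1/18^{ℓ(n)}) · (1/8) · (2^{ℓ(n)+1} - n + (n - 2^{ℓ(n)})/9) < 8 · (4/9)^{ℓ(n)}, and consequently lim_{n→∞} n² · (1/18^{ℓ(n)}) · (1/8) · (2^{ℓ(n)+1} - n + (n - 2^{ℓ(n)})/9) = 0. -/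
open MeasureTheory Real Set Filter
open scoped ENNReal Topology

noncomputable section

theorem unconstrained_part_vanishes (L : ℕ → ℕ)
    (hL : ∀ n, 2 ≤ n → 2 ^ L n ≤ n ∧ n < 2 ^ (L n + 1)) (U : ℕ → ℝ)
    (hU : ∀ n, 2 ≤ n → U n =
      (n : ℝ) ^ 2 *
        ((1 / 18 ^ L n) * (1 / 8) * (2 ^ (L n + 1) - (n : ℝ) + ((n : ℝ) - 2 ^ L n) / 9))) :
    (∀ n, 2 ≤ n → 0 ≤ U n ∧ U n < 8 * (4 / 9 : ℝ) ^ L n) ∧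
      Tendsto U atTop (𝓝 0) := by
  have key : ∀ n, 2 ≤ n → 0 ≤ U n ∧ U n < 8 * (4 / 9 : ℝ) ^ L n := by
    intro n hn
    obtain ⟨h1, h2⟩ := hL n hn
    set a : ℝ := (2 : ℝ) ^ L n with ha_def
    set b : ℝ := (9 : ℝ) ^ L n with hb_def
    have ha : 0 < a := by positivity
    have hb : 0 < b := by positivity
    have h1' : a ≤ (n : ℝ) := by
      rw [ha_def]; exact_mod_cast h1
    have h2' : (n : ℝ) < 2 * a := by
      have : (n : ℝ) < 2 ^ (L n + 1) := by exact_mod_cast h2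
      rw [pow_succ] at this; linarith
    have h18 : (18 : ℝ) ^ L n = a * b := by
      rw [ha_def, hb_def, ← mul_pow]; norm_num
    have h49 : (4 / 9 : ℝ) ^ L n = a ^ 2 / b := by
      rw [ha_def, hb_def, div_pow, ← pow_mul, mul_comm (L n) 2, pow_mul]
      norm_num
    have hpow : (2 : ℝ) ^ (L n + 1) = 2 * a := by rw [ha_def, pow_succ]; ring
    rw [hU n hn, h18, hpow]
    constructor
    · apply mul_nonneg (by positivity)
      apply mul_nonneg (by positivity)
      have : (0:ℝ) ≤ (n:ℝ) - a := by linarith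
      have : (0:ℝ) ≤ 2 * a - n := by linarith
      linarith [div_nonneg (show (0:ℝ) ≤ (n:ℝ) - a by linarith) (by norm_num : (0:ℝ) ≤ 9)]
    · rw [h49]
      have hE : (n : ℝ) ^ 2 * (1 / (a * b) * (1 / 8) * (2 * a - (n:ℝ) + ((n:ℝ) - a) / 9))
          = ((n : ℝ) ^ 2 * (17 * a - 8 * n)) / (72 * (a * b)) := by
        field_simp; ring
      have hR : 8 * (a ^ 2 / b) = (576 * a ^ 3) / (72 * (a * b)) := by
        field_simp; ring
      rw [hE, hR, div_lt_div_iff_of_pos_right (by positivity)]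
      have hn2 : (2:ℝ) ≤ (n:ℝ) := by exact_mod_cast hn
      nlinarith [sq_nonneg ((n:ℝ) - a), sq_nonneg ((n:ℝ) + a), mul_pos ha ha,
        mul_nonneg (sq_nonneg (n:ℝ)) (sub_nonneg.2 h1'),
        mul_nonneg (mul_nonneg (sub_nonneg.2 h1') (sub_nonneg.2 h1')) ha.le,
        mul_pos (mul_pos ha ha) ha]
  refine ⟨key, ?_⟩
  have tendsto_L : Tendsto L atTop atTop := by
    rw [tendsto_atTop]
    intro M
    filter_upwards [eventually_ge_atTop (max 2 (2 ^ M))] with n hn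
    have hn2 : 2 ≤ n := le_trans (le_max_left _ _) hn
    have h2 := (hL n hn2).2
    have : 2 ^ M < 2 ^ (L n + 1) := lt_of_le_of_lt (le_trans (le_max_right _ _) hn) h2
    have := (Nat.pow_lt_pow_iff_right (by norm_num : 1 < 2)).mp this
    omega
  have h49 : Tendsto (fun n => (8 : ℝ) * (4 / 9 : ℝ) ^ L n) atTop (𝓝 0) := by
    have := (tendsto_pow_atTop_nhds_zero_of_lt_one (by norm_num : (0:ℝ) ≤ 4/9)
      (by norm_num : (4/9:ℝ) < 1)).comp tendsto_L
    simpa using this.const_mul 8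
  refine squeeze_zero' ?_ ?_ h49
  · filter_upwards [eventually_ge_atTop 2] with n hn using (key n hn).1
  · filter_upwards [eventually_ge_atTop 2] with n hn using (key n hn).2.le
end
end

section
/- Define W_n = (1/18^{ℓ(n)}) · (1/8) · (2^{ℓ(n)+1} - n + (n - 2^{ℓ(n)})/9) + (1 + 1/n)² for n ≥ 2, where 2^{ℓ(n)} ≤ n < 2^{ℓ(n)+1}. Then lim_{n→∞} W_n = 1, lim_{n→∞} (2 log n)/(-log(W_n - 1)) = 2, and lim_{n→∞} n²(W_n - 1) = ∞. -/
open MeasureTheory Real Set Filter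
open scoped ENNReal Topology

noncomputable section

/-!
Since `(1 + 1/n)² - 1 = 2/n + 1/n²`, everything hinges on the first summand of `W_n`: its bracket
is at most `(10/9) 2^ℓ`, so the summand is `O(2^ℓ / 18^ℓ) = O(9^{-ℓ})`, which is at most
`1/(4·4^ℓ) ≤ 1/n²` because `n < 2^{ℓ+1}`. Hence `2/n ≤ W_n - 1 ≤ 3/n`, and all three limits
follow: `-log (W_n - 1) = log n + O(1)` and `n² (W_n - 1) ≥ 2n`.
-/

/-- The first summand of `W_n`, with `ℓ(n) = l` and `n` relaxed to a real `x`. -/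
def cantorError (l : ℕ) (x : ℝ) : ℝ :=
  (1 / 18 ^ l) * (1 / 8) * (2 ^ (l + 1) - x + (x - 2 ^ l) / 9)

section CantorError

variable {l : ℕ} {x : ℝ}

lemma cantorError_nonneg (hl : 2 ^ l ≤ x) (hu : x ≤ 2 ^ (l + 1)) : 0 ≤ cantorError l x := by
  unfold cantorError
  have : 0 ≤ 2 ^ (l + 1) - x + (x - 2 ^ l) / 9 := by linarith
  positivity

/-- The bracket is at most `(10/9) 2^l`, while `x² ≤ 4^(l+1)`, and `4^l ≤ 9^l`. -/
lemma cantorError_le_inv_sq (hl : 2 ^ l ≤ x) (hu : x ≤ 2 ^ (l + 1)) :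
    cantorError l x ≤ 1 / x ^ 2 := by
  have h2l : (0 : ℝ) < 2 ^ l := by positivity
  have hx : 0 < x := h2l.trans_le hl
  have h4 : ((2 : ℝ) ^ l) ^ 2 ≤ 9 ^ l := by
    rw [← pow_mul, mul_comm, pow_mul]
    exact pow_le_pow_left₀ (by norm_num) (by norm_num) l
  have hx2 : x ^ 2 ≤ 4 * ((2 : ℝ) ^ l) ^ 2 := by
    rw [pow_succ] at hu
    nlinarith
  have h18 : (18 : ℝ) ^ l = 2 ^ l * 9 ^ l := by rw [← mul_pow]; norm_num
  have hbracket : 2 ^ (l + 1) - x + (x - 2 ^ l) / 9 ≤ 10 / 9 * (2 : ℝ) ^ l := by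
    rw [pow_succ]; linarith
  unfold cantorError
  rw [h18, show 1 / (2 ^ l * 9 ^ l : ℝ) * (1 / 8) * (2 ^ (l + 1) - x + (x - 2 ^ l) / 9)
      = (2 ^ (l + 1) - x + (x - 2 ^ l) / 9) / (8 * (2 ^ l * 9 ^ l)) by ring,
    div_le_div_iff₀ (by positivity) (by positivity)]
  nlinarith [mul_le_mul hbracket hx2 (sq_nonneg x) (by positivity),
    mul_le_mul_of_nonneg_left h4 h2l.le]

lemma cantorError_add_sq_sub_one_mem_Icc (hl : 2 ^ l ≤ x) (hu : x ≤ 2 ^ (l + 1))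
    (h2 : 2 ≤ x) : cantorError l x + (1 + 1 / x) ^ 2 - 1 ∈ Icc (2 / x) (3 / x) := by
  have hx : 0 < x := by linarith
  have hsq : (1 + 1 / x) ^ 2 - 1 = 2 / x + 1 / x ^ 2 := by field_simp; ring
  have hinv : 2 / x ^ 2 ≤ 1 / x := by
    rw [div_le_div_iff₀ (by positivity) hx]; nlinarith
  have := cantorError_nonneg hl hu
  have := cantorError_le_inv_sq hl hu
  rw [add_sub_assoc, hsq]
  constructor
  · linarith [one_div_pos.2 (pow_pos hx 2)]
  · linarith [show 3 / x = 2 / x + 1 / x by ring, show 2 / x ^ 2 = 2 * (1 / x ^ 2) by ring]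

end CantorError

section InverseRate

variable {u : ℕ → ℝ} {c C : ℝ}

lemma tendsto_zero_of_eventually_le_div (h0 : ∀ᶠ n in atTop, 0 ≤ u n)
    (hC : ∀ᶠ n in atTop, u n ≤ C / n) : Tendsto u atTop (𝓝 0) :=
  tendsto_of_tendsto_of_tendsto_of_le_of_le' tendsto_const_nhds
    (tendsto_const_div_atTop_nhds_zero_nat C) h0 hC

lemma tendsto_sq_mul_atTop_of_div_le (hc : 0 < c) (h : ∀ᶠ n in atTop, c / n ≤ u n) :
    Tendsto (fun n : ℕ => (n : ℝ) ^ 2 * u n) atTop atTop := by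
  refine tendsto_atTop_mono' atTop ?_ (tendsto_natCast_atTop_atTop.const_mul_atTop hc)
  filter_upwards [h, eventually_gt_atTop 0] with n hn hpos
  have hn0 : (0 : ℝ) < n := by exact_mod_cast hpos
  calc c * n = (n : ℝ) ^ 2 * (c / n) := by field_simp
    _ ≤ (n : ℝ) ^ 2 * u n := by gcongr

lemma tendsto_log_natCast_atTop : Tendsto (fun n : ℕ => Real.log n) atTop atTop :=
  Real.tendsto_log_atTop.comp tendsto_natCast_atTop_atTop

lemma tendsto_sub_div_log_atTop (d : ℝ) :
    Tendsto (fun n : ℕ => (Real.log n - d) / Real.log n) atTop (𝓝 1) := by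
  have : Tendsto (fun n : ℕ => 1 - d / Real.log n) atTop (𝓝 (1 - 0)) :=
    tendsto_const_nhds.sub (tendsto_const_nhds.div_atTop tendsto_log_natCast_atTop)
  rw [sub_zero] at this
  refine this.congr' ?_
  filter_upwards [tendsto_log_natCast_atTop.eventually_gt_atTop 0] with n hn
  rw [sub_div, div_self hn.ne']

lemma neg_log_mem_Icc_of_mem_Icc_div {x y : ℝ} (hc : 0 < c) (hy : 0 < y)
    (h : x ∈ Icc (c / y) (C / y)) :
    -Real.log x ∈ Icc (Real.log y - Real.log C) (Real.log y - Real.log c) := by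
  obtain ⟨hlo, hhi⟩ := h
  have hx : 0 < x := (div_pos hc hy).trans_le hlo
  have hC : 0 < C := (div_pos_iff_of_pos_right hy).1 (hx.trans_le hhi)
  have hlo' := Real.log_le_log (div_pos hc hy) hlo
  have hhi' := Real.log_le_log hx hhi
  rw [Real.log_div hc.ne' hy.ne'] at hlo'
  rw [Real.log_div hC.ne' hy.ne'] at hhi'
  constructor <;> linarith

/-- `-log (u n) = log n + O(1)`. -/
lemma tendsto_log_div_neg_log (hc : 0 < c)
    (h : ∀ᶠ n : ℕ in atTop, u n ∈ Icc (c / n) (C / n)) :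
    Tendsto (fun n : ℕ => Real.log n / -Real.log (u n)) atTop (𝓝 1) := by
  have hlog : ∀ᶠ n : ℕ in atTop,
      -Real.log (u n) ∈ Icc (Real.log n - Real.log C) (Real.log n - Real.log c) := by
    filter_upwards [h, eventually_gt_atTop 0] with n hn hpos
    exact neg_log_mem_Icc_of_mem_Icc_div hc (by exact_mod_cast hpos) hn
  have hratio : Tendsto (fun n : ℕ => -Real.log (u n) / Real.log n) atTop (𝓝 1) := by
    refine tendsto_of_tendsto_of_tendsto_of_le_of_le' (tendsto_sub_div_log_atTop (Real.log C))
      (tendsto_sub_div_log_atTop (Real.log c)) ?_ ?_ <;>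
    filter_upwards [hlog, tendsto_log_natCast_atTop.eventually_gt_atTop 0] with n hn hpos
    exacts [div_le_div_of_nonneg_right hn.1 hpos.le, div_le_div_of_nonneg_right hn.2 hpos.le]
  simpa only [inv_div, inv_one] using hratio.inv₀ one_ne_zero

end InverseRate

theorem shifted_constraints_dimension_two (L : ℕ → ℕ)
    (hL : ∀ n, 2 ≤ n → 2 ^ L n ≤ n ∧ n < 2 ^ (L n + 1)) (W : ℕ → ℝ)
    (hW : ∀ n, 2 ≤ n → W n =
      (1 / 18 ^ L n) * (1 / 8) * (2 ^ (L n + 1) - (n : ℝ) + ((n : ℝ) - 2 ^ L n) / 9) +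
        (1 + 1 / (n : ℝ)) ^ 2) :
    Tendsto W atTop (𝓝 1) ∧
      Tendsto (fun n : ℕ => (2 * Real.log (n : ℝ)) / (-Real.log (W n - 1))) atTop (𝓝 2) ∧
      Tendsto (fun n : ℕ => (n : ℝ) ^ 2 * (W n - 1)) atTop atTop := by
  have hbound : ∀ᶠ n : ℕ in atTop, W n - 1 ∈ Icc (2 / (n : ℝ)) (3 / n) := by
    filter_upwards [eventually_ge_atTop 2] with n hn
    obtain ⟨hlo, hhi⟩ := hL n hn
    rw [hW n hn]
    exact cantorError_add_sq_sub_one_mem_Icc (by exact_mod_cast hlo)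
      (by exact_mod_cast hhi.le) (by exact_mod_cast hn)
  refine ⟨?_, ?_, tendsto_sq_mul_atTop_of_div_le two_pos (hbound.mono fun _ h => h.1)⟩
  · have hsub := tendsto_zero_of_eventually_le_div
      (hbound.mono fun n h => (by positivity : (0 : ℝ) ≤ 2 / n).trans h.1)
      (hbound.mono fun _ h => h.2)
    simpa using hsub.add_const 1
  · simpa only [mul_div_assoc, mul_one] using
      (tendsto_log_div_neg_log two_pos hbound).const_mul 2
end
end

section
/- Let β = log 2 / log 3 and define, for n ≥ 2 with 2^{ℓ(n)} ≤ n < 2^{ℓ(n)+1}, U_n = (1/18^{ℓ(n)}) · (1/8) · (2^{ℓ(n)+1} - n + (n - 2^{ℓ(n)})/9). Then for every n ∈ ℕ, 1/72 ≤ n^{2/β} · U_n ≤ 9/8. -/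
open MeasureTheory Real Set Filter
open scoped ENNReal Topology

noncomputable section

theorem quantization_coefficient_bounds (L : ℕ → ℕ)
    (hL : ∀ n, 1 ≤ n → 2 ^ L n ≤ n ∧ n < 2 ^ (L n + 1)) (U : ℕ → ℝ)
    (hU : ∀ n, 1 ≤ n → U n =
      (1 / 18 ^ L n) * (1 / 8) * (2 ^ (L n + 1) - (n : ℝ) + ((n : ℝ) - 2 ^ L n) / 9)) :
    ∀ n : ℕ, 1 ≤ n →
      1 / 72 ≤ (n : ℝ) ^ (2 / (Real.log 2 / Real.log 3)) * U n ∧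
        (n : ℝ) ^ (2 / (Real.log 2 / Real.log 3)) * U n ≤ 9 / 8 := by

  intro n hn
  obtain ⟨h1, h2⟩ := hL n hn
  set c : ℝ := 2 / (Real.log 2 / Real.log 3) with hcdef
  have hlog2 : (0:ℝ) < Real.log 2 := Real.log_pos (by norm_num)
  have hlog3 : (0:ℝ) < Real.log 3 := Real.log_pos (by norm_num)
  have hc0 : 0 < c := by positivity
  have hc9 : (2:ℝ) ^ c = 9 := by
    rw [Real.rpow_def_of_pos (by norm_num : (0:ℝ) < 2)]
    have h9 : Real.log 9 = 2 * Real.log 3 := by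
      rw [show (9:ℝ) = 3 ^ 2 by norm_num, Real.log_pow]
      push_cast; ring
    have : Real.log 2 * c = Real.log 9 := by
      rw [h9, hcdef]; field_simp
    rw [this, Real.exp_log (by norm_num)]
  set ℓ := L n with hldef
  have hn1 : ((2:ℝ) ^ ℓ) ≤ (n:ℝ) := by exact_mod_cast h1
  have hn2 : (n:ℝ) ≤ (2:ℝ) ^ (ℓ + 1) := by exact_mod_cast h2.le
  have hpow : ∀ k : ℕ, ((2:ℝ) ^ k) ^ c = 9 ^ k := by
    intro k
    rw [← Real.rpow_natCast 2 k, ← Real.rpow_natCast 9 k, ← Real.rpow_mul (by norm_num),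
      mul_comm, Real.rpow_mul (by norm_num), hc9]
  have hA1 : (9:ℝ) ^ ℓ ≤ (n:ℝ) ^ c := by
    rw [← hpow ℓ]
    exact Real.rpow_le_rpow (by positivity) hn1 hc0.le
  have hA2 : (n:ℝ) ^ c ≤ (9:ℝ) ^ (ℓ + 1) := by
    rw [← hpow (ℓ + 1)]
    exact Real.rpow_le_rpow (by positivity) hn2 hc0.le
  have hUval : U n = (17 * 2 ^ ℓ - 8 * (n:ℝ)) / (72 * 18 ^ ℓ) := by
    rw [hU n hn]
    have h18 : ((18:ℝ) ^ ℓ) ≠ 0 := by positivity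
    field_simp
    ring
  have hE1 : (2:ℝ) ^ ℓ / (72 * 18 ^ ℓ) ≤ U n := by
    rw [hUval]
    apply div_le_div_of_nonneg_right _ (by positivity)
    have hn2' : (n:ℝ) ≤ 2 * 2 ^ ℓ := by
      rw [pow_succ] at hn2; linarith
    linarith
  have hE2 : U n ≤ 9 * (2:ℝ) ^ ℓ / (72 * 18 ^ ℓ) := by
    rw [hUval]
    apply div_le_div_of_nonneg_right _ (by positivity)
    nlinarith [hn1]
  have hEpos : (0:ℝ) ≤ (2:ℝ) ^ ℓ / (72 * 18 ^ ℓ) := by positivity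
  have hApos : (0:ℝ) ≤ (n:ℝ) ^ c := Real.rpow_nonneg (Nat.cast_nonneg n) c
  constructor
  · have key : (9:ℝ) ^ ℓ * ((2:ℝ) ^ ℓ / (72 * 18 ^ ℓ)) ≤ (n:ℝ) ^ c * U n := by
      apply mul_le_mul hA1 hE1 hEpos hApos
    have heq : (9:ℝ) ^ ℓ * ((2:ℝ) ^ ℓ / (72 * 18 ^ ℓ)) = 1 / 72 := by
      have : (9:ℝ) ^ ℓ * 2 ^ ℓ = 18 ^ ℓ := by
        rw [← mul_pow]; norm_num
      field_simp
      nlinarith [this]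
    linarith
  · have key : (n:ℝ) ^ c * U n ≤ (9:ℝ) ^ (ℓ + 1) * (9 * (2:ℝ) ^ ℓ / (72 * 18 ^ ℓ)) := by
      apply mul_le_mul hA2 hE2 (le_trans hEpos hE1) (by positivity)
    have heq : (9:ℝ) ^ (ℓ + 1) * (9 * (2:ℝ) ^ ℓ / (72 * 18 ^ ℓ)) = 9 / 8 := by
      have : (9:ℝ) ^ ℓ * 2 ^ ℓ = 18 ^ ℓ := by
        rw [← mul_pow]; norm_num
      rw [pow_succ]
      field_simp
      nlinarith [this]
    linarith
end
end

section
/- Let β = log 2/log 3 and define U_n = (1/18^{ℓ(n)}) · (1/8) · (2^{ℓ(n)+1} - n + (n - 2^{ℓ(n)})/9) for n ≥ 2 with 2^{ℓ(n)} ≤ n < 2^{ℓ(n)+1}. Then lim_{n→∞} (2 log n)/(-log U_n) = β. -/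
/-!
Since `2 ^ ℓ(n) ≤ n < 2 ^ (ℓ(n) + 1)`, the bracket in `U_n` lies between `2 ^ ℓ(n) / 9` and
`2 ^ ℓ(n)`, so `U_n⁻¹` lies between `8 · 9 ^ ℓ(n)` and `72 · 9 ^ ℓ(n)`. Hence `log n` and
`-log U_n` are `ℓ(n) log 2` and `ℓ(n) log 9` up to bounded errors, and as `ℓ(n) → ∞` their ratio
tends to `log 2 / log 9`; the factor `2` turns this into `log 2 / log 3`.
-/

open MeasureTheory Real Set Filter
open scoped ENNReal Topology

noncomputable section

theorem tendsto_atTop_of_lt_pow_succ {b : ℕ} (hb : 1 < b) {L : ℕ → ℕ}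
    (hL : ∀ᶠ n in atTop, n < b ^ (L n + 1)) : Tendsto L atTop atTop := by
  refine tendsto_atTop.2 fun M => ?_
  filter_upwards [hL, eventually_ge_atTop (b ^ M)] with n hn hM
  exact Nat.lt_succ_iff.1 ((Nat.pow_lt_pow_iff_right hb).1 (hM.trans_lt hn))

theorem tendsto_div_of_le_mul_add_of_mul_add_le {ι : Type*} {l : Filter ι} {f g : ι → ℝ}
    {c d₁ d₂ : ℝ} (hg : Tendsto g l atTop) (h₁ : ∀ᶠ i in l, g i * c + d₁ ≤ f i)
    (h₂ : ∀ᶠ i in l, f i ≤ g i * c + d₂) : Tendsto (fun i => f i / g i) l (𝓝 c) := by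
  have hbound (d : ℝ) : Tendsto (fun i => c + d / g i) l (𝓝 c) := by
    simpa using tendsto_const_nhds.add (tendsto_const_nhds.div_atTop hg)
  refine tendsto_of_tendsto_of_tendsto_of_le_of_le' (hbound d₁) (hbound d₂) ?_ ?_
  · filter_upwards [h₁, hg.eventually_gt_atTop 0] with i hi hpos
    rw [le_div_iff₀ hpos, add_mul, div_mul_cancel₀ _ hpos.ne']
    linarith [mul_comm c (g i)]
  · filter_upwards [h₂, hg.eventually_gt_atTop 0] with i hi hpos
    rw [div_le_iff₀ hpos, add_mul, div_mul_cancel₀ _ hpos.ne']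
    linarith [mul_comm c (g i)]

theorem log_bounds_of_mul_pow_le_of_le_mul_pow {b c₁ c₂ x : ℝ} {k : ℕ} (hb : 0 < b)
    (hc₁ : 0 < c₁) (h₁ : c₁ * b ^ k ≤ x) (h₂ : x ≤ c₂ * b ^ k) :
    k * log b + log c₁ ≤ log x ∧ log x ≤ k * log b + log c₂ := by
  have hx : 0 < x := (mul_pos hc₁ (pow_pos hb k)).trans_le h₁
  have hc₂ : 0 < c₂ := pos_of_mul_pos_left (hx.trans_le h₂) (pow_pos hb k).le
  have hlog (c : ℝ) (hc : 0 < c) : log (c * b ^ k) = k * log b + log c := by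
    rw [log_mul hc.ne' (pow_pos hb k).ne', log_pow, add_comm]
  constructor
  · rw [← hlog c₁ hc₁]
    exact log_le_log (by positivity) h₁
  · rw [← hlog c₂ hc₂]
    exact log_le_log hx h₂

/-- The paper's `U_n` is `cantorErrorGap ℓ(n) n`. -/
def cantorErrorGap (k : ℕ) (x : ℝ) : ℝ :=
  (1 / 18 ^ k) * (1 / 8) * (2 ^ (k + 1) - x + (x - 2 ^ k) / 9)

/-- The bracket decreases linearly in `x`, from `2 ^ k` at `x = 2 ^ k` to `2 ^ k / 9` at
`x = 2 ^ (k + 1)`. -/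
theorem inv_cantorErrorGap_mem_Icc {k : ℕ} {x : ℝ} (h₁ : 2 ^ k ≤ x) (h₂ : x ≤ 2 ^ (k + 1)) :
    (cantorErrorGap k x)⁻¹ ∈ Icc (8 * 9 ^ k) (72 * 9 ^ k) := by
  have hinv : (cantorErrorGap k x)⁻¹ = 72 * 2 ^ k * 9 ^ k / (17 * 2 ^ k - 8 * x) := by
    rw [cantorErrorGap, show (18 : ℝ) ^ k = 2 ^ k * 9 ^ k by rw [← mul_pow]; norm_num, pow_succ]
    field_simp
    ring
  have h₂' : x ≤ 2 * 2 ^ k := by rwa [pow_succ'] at h₂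
  have hpos : (0 : ℝ) < 2 ^ k := by positivity
  rw [hinv, mem_Icc, le_div_iff₀ (by linarith), div_le_iff₀ (by linarith)]
  constructor <;> nlinarith [pow_pos (show (0 : ℝ) < 9 by norm_num) k]

theorem constrained_dimension_hausdorff (L : ℕ → ℕ)
    (hL : ∀ n, 2 ≤ n → 2 ^ L n ≤ n ∧ n < 2 ^ (L n + 1)) (U : ℕ → ℝ)
    (hU : ∀ n, 2 ≤ n → U n =
      (1 / 18 ^ L n) * (1 / 8) * (2 ^ (L n + 1) - (n : ℝ) + ((n : ℝ) - 2 ^ L n) / 9)) :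
    Tendsto (fun n : ℕ => (2 * Real.log (n : ℝ)) / (-Real.log (U n))) atTop
      (𝓝 (Real.log 2 / Real.log 3)) := by
  have hL' : ∀ᶠ n in atTop, 2 ^ L n ≤ n ∧ n < 2 ^ (L n + 1) := eventually_atTop.2 ⟨2, hL⟩
  have hLnat := tendsto_atTop_of_lt_pow_succ one_lt_two (hL'.mono fun _ h => h.2)
  have hLreal : Tendsto (fun n => (L n : ℝ)) atTop atTop := tendsto_natCast_atTop_atTop.comp hLnat
  have hlogn : ∀ᶠ n in atTop, L n * log 2 + log 1 ≤ log (n : ℝ) ∧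
      log (n : ℝ) ≤ L n * log 2 + log 2 := hL'.mono fun n ⟨h₁, h₂⟩ =>
    log_bounds_of_mul_pow_le_of_le_mul_pow two_pos one_pos (by rw [one_mul]; exact_mod_cast h₁)
      (by rw [← pow_succ']; exact_mod_cast h₂.le)
  have hlogU : ∀ᶠ n in atTop, L n * log 9 + log 8 ≤ -log (U n) ∧
      -log (U n) ≤ L n * log 9 + log 72 := by
    filter_upwards [eventually_ge_atTop 2, hL'] with n hn ⟨h₁, h₂⟩
    rw [← log_inv, hU n hn]
    obtain ⟨hlo, hhi⟩ := inv_cantorErrorGap_mem_Icc (x := n) (by exact_mod_cast h₁)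
      (by exact_mod_cast h₂.le)
    exact log_bounds_of_mul_pow_le_of_le_mul_pow (by norm_num) (by norm_num) hlo hhi
  have hn_lim : Tendsto (fun n : ℕ => log (n : ℝ) / L n) atTop (𝓝 (log 2)) :=
    tendsto_div_of_le_mul_add_of_mul_add_le hLreal (hlogn.mono fun _ h => h.1)
      (hlogn.mono fun _ h => h.2)
  have hU_lim : Tendsto (fun n => -log (U n) / L n) atTop (𝓝 (log 9)) :=
    tendsto_div_of_le_mul_add_of_mul_add_le hLreal (hlogU.mono fun _ h => h.1)
      (hlogU.mono fun _ h => h.2)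
  rw [show log 2 / log 3 = 2 * log 2 / log 9 by
    rw [show (9 : ℝ) = 3 ^ 2 by norm_num, log_pow]; push_cast; ring]
  refine ((hn_lim.const_mul 2).div hU_lim (log_pos (by norm_num)).ne').congr' ?_
  filter_upwards [hLnat.eventually_gt_atTop 0] with n hn
  rw [Pi.div_apply, mul_div_assoc', div_div_div_cancel_right₀ (by positivity)]
end
end

section
/- Let P be the canonical probability measure on the Cantor set, n ≥ 2, and α_n ⊆ ⋃_{j=1}^n S_j an optimal set of n points for P with respect to constraints S_j = {(x, 1/j) : 0 ≤ x ≤ 1}, with elements (a₁,b₁),…,(a_n,b_n), a₁ < ⋯ < a_n. Then b_j = 1/n for all j, i.e., α_n ⊆ S_n. -/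
/-!
Two properties of the Cantor measure `P` drive the argument: it is concentrated on `[0, 1]` (the
mass at distance more than `1/2 + s` from `1/2` does not decrease when `s` is tripled, and it tends
to `0` by tightness), and its support is infinite (it contains `T1^[k] (T2 c)` for every `k`).

Let `α` be optimal. Each `q ∈ α` has a Voronoi region of positive measure: otherwise `q` can be
dropped without changing the error, and a new point `(c, 1/n)`, with `c` a support point different
from the remaining abscissae, strictly lowers the error near `c`. Now if some `p ∈ α` had
`p.2 = 1/j > 1/n`, moving it down to `(p.1, 1/n)` strictly decreases `ρ(x, p)` for every `x`,
hence strictly decreases the error on the Voronoi region of `p`, contradicting optimality.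
-/

open MeasureTheory Real Set Filter
open scoped ENNReal Topology

noncomputable section

theorem Finset.inf'_erase_of_ne {ι β : Type*} [DecidableEq ι] [LinearOrder β] {s : Finset ι}
    {a : ι} (hs : s.Nonempty) (hs' : (s.erase a).Nonempty) {f : ι → β}
    (h : s.inf' hs f ≠ f a) : (s.erase a).inf' hs' f = s.inf' hs f := by
  obtain ⟨i, hi, hfi⟩ := s.exists_mem_eq_inf' hs f
  refine le_antisymm ?_ (Finset.inf'_mono f (s.erase_subset a) hs')
  exact hfi ▸ Finset.inf'_le f (Finset.mem_erase.2 ⟨fun hia => h (hfi.trans (congrArg f hia)), hi⟩)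

theorem Finset.card_insert_erase_le {ι : Type*} [DecidableEq ι] {s : Finset ι} {b : ι}
    (hb : b ∈ s) (a : ι) : (insert a (s.erase b)).card ≤ s.card := by
  have := Finset.card_erase_add_one hb
  have := Finset.card_insert_le a (s.erase b)
  omega

theorem MeasureTheory.integral_lt_integral_of_le_of_lt_on {Ω : Type*} [MeasurableSpace Ω]
    {μ : Measure Ω} {f g : Ω → ℝ} (hf : Integrable f μ) (hg : Integrable g μ) (hle : f ≤ g)
    {s : Set Ω} (hs : μ s ≠ 0) (hlt : ∀ x ∈ s, f x < g x) :
    ∫ x, f x ∂μ < ∫ x, g x ∂μ := by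
  rw [← sub_pos, ← integral_sub hg hf,
    integral_pos_iff_support_of_nonneg (fun x => sub_nonneg.2 (hle x)) (hg.sub hf)]
  exact pos_iff_ne_zero.2 fun h0 => hs <| measure_mono_null
    (fun x hx => (sub_pos.2 (hlt x hx)).ne') h0

theorem Continuous.integrable_of_ae_mem_isCompact {X E : Type*} [TopologicalSpace X]
    [T2Space X] [MeasurableSpace X] [OpensMeasurableSpace X] [NormedAddCommGroup E] {f : X → E}
    (hf : Continuous f) {μ : Measure X} [IsFiniteMeasure μ] {K : Set X} (hK : IsCompact K)
    (hμK : ∀ᵐ x ∂μ, x ∈ K) :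
    Integrable f μ := by
  rw [← Measure.restrict_eq_self_of_ae_mem hμK]
  exact hf.continuousOn.integrableOn_compact hK

theorem MeasureTheory.Measure.mem_support_of_smul_map_le {X Y : Type*} [TopologicalSpace X]
    [MeasurableSpace X] [OpensMeasurableSpace X] [TopologicalSpace Y] [MeasurableSpace Y]
    [BorelSpace Y] {μ : Measure X} {ν : Measure Y} {f : X → Y} (hf : Continuous f)
    {c : ℝ≥0∞} (hc : c ≠ 0) (hle : c • μ.map f ≤ ν) {x : X} (hx : x ∈ μ.support) :
    f x ∈ ν.support := by
  rw [Measure.mem_support_iff_forall] at hx ⊢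
  intro U hU
  calc 0 < c * μ (f ⁻¹' U) := ENNReal.mul_pos hc (hx _ (hf.continuousAt hU)).ne'
    _ ≤ c * μ.map f U := by gcongr; exact Measure.le_map_apply hf.aemeasurable U
    _ ≤ ν U := hle U

section CantorMeasure

variable {P : Measure ℝ}

theorem continuous_T1 : Continuous T1 := continuous_id.div_const 3

theorem continuous_T2 : Continuous T2 := (continuous_id.div_const 3).add continuous_const

theorem measure_eq_half_preimage_T1_add_half_preimage_T2
    (hP : P = (1 / 2 : ℝ≥0∞) • P.map T1 + (1 / 2 : ℝ≥0∞) • P.map T2)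
    {s : Set ℝ} (hs : MeasurableSet s) :
    P s = 1 / 2 * P (T1 ⁻¹' s) + 1 / 2 * P (T2 ⁻¹' s) := by
  conv_lhs => rw [hP]
  rw [Measure.add_apply, Measure.smul_apply, Measure.smul_apply, smul_eq_mul, smul_eq_mul,
    Measure.map_apply continuous_T1.measurable hs, Measure.map_apply continuous_T2.measurable hs]

theorem measure_abs_sub_half_gt_le
    (hP : P = (1 / 2 : ℝ≥0∞) • P.map T1 + (1 / 2 : ℝ≥0∞) • P.map T2) (r : ℝ) :
    P {x | r < |x - 1 / 2|} ≤ P {x | 3 * r - 1 < |x - 1 / 2|} := by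
  have hpre : ∀ y : ℝ, r < |y / 3 - 1 / 2| ∨ r < |y / 3 + 2 / 3 - 1 / 2| →
      3 * r - 1 < |y - 1 / 2| := by
    intro y hy
    rw [lt_abs]
    rcases hy with hy | hy <;> rcases lt_abs.1 hy with h | h <;>
      first | exact Or.inl (by linarith) | exact Or.inr (by linarith)
  have hmeas : MeasurableSet {x : ℝ | r < |x - 1 / 2|} :=
    measurableSet_lt measurable_const (by fun_prop)
  rw [measure_eq_half_preimage_T1_add_half_preimage_T2 hP hmeas]
  calc 1 / 2 * P (T1 ⁻¹' {x | r < |x - 1 / 2|}) + 1 / 2 * P (T2 ⁻¹' {x | r < |x - 1 / 2|})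
      ≤ 1 / 2 * P {x | 3 * r - 1 < |x - 1 / 2|} + 1 / 2 * P {x | 3 * r - 1 < |x - 1 / 2|} := by
        gcongr
        · exact fun y hy => hpre y (Or.inl hy)
        · exact fun y hy => hpre y (Or.inr hy)
    _ = P {x | 3 * r - 1 < |x - 1 / 2|} := by
        rw [← add_mul, one_div, ENNReal.inv_two_add_inv_two, one_mul]

theorem measure_abs_sub_half_gt_eq_zero [IsFiniteMeasure P]
    (hP : P = (1 / 2 : ℝ≥0∞) • P.map T1 + (1 / 2 : ℝ≥0∞) • P.map T2) {s : ℝ} (hs : 0 < s) :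
    P {x | 1 / 2 + s < |x - 1 / 2|} = 0 := by
  set m : ℕ → ℝ≥0∞ := fun k => P {x | 1 / 2 + 3 ^ k * s < |x - 1 / 2|}
  have hmono : Monotone m := monotone_nat_of_le_succ fun k => by
    have h := measure_abs_sub_half_gt_le hP (1 / 2 + 3 ^ k * s)
    rwa [show 3 * (1 / 2 + 3 ^ k * s) - 1 = 1 / 2 + 3 ^ (k + 1) * s by ring] at h
  have htight : Tendsto (fun r : ℝ => P {x | r < |x - 1 / 2|}) atTop (𝓝 0) := by
    convert tendsto_measure_compl_closedBall_of_isTightMeasureSet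
      (isTightMeasureSet_singleton (μ := P)) (1 / 2 : ℝ) using 2 with r
    simp [compl_def, Real.dist_eq]
  have hlim : Tendsto m atTop (𝓝 0) := htight.comp <| tendsto_atTop_add_const_left _ _ <|
    (tendsto_pow_atTop_atTop_of_one_lt (by norm_num : (1 : ℝ) < 3)).atTop_mul_const hs
  simpa [m] using hmono.ge_of_tendsto hlim 0

theorem ae_mem_Icc_of_eq_half_map_T1_add_half_map_T2 [IsFiniteMeasure P]
    (hP : P = (1 / 2 : ℝ≥0∞) • P.map T1 + (1 / 2 : ℝ≥0∞) • P.map T2) :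
    ∀ᵐ x ∂P, x ∈ Icc (0 : ℝ) 1 := by
  have hk : ∀ k : ℕ, ∀ᵐ x ∂P, |x - 1 / 2| ≤ 1 / 2 + 1 / ((k : ℝ) + 1) := fun k => by
    simpa [ae_iff] using measure_abs_sub_half_gt_eq_zero hP (s := 1 / ((k : ℝ) + 1)) (by positivity)
  filter_upwards [ae_all_iff.2 hk] with x hx
  have hx' : |x - 1 / 2| ≤ 1 / 2 := by
    by_contra! h
    obtain ⟨k, hk⟩ := exists_nat_one_div_lt (sub_pos.2 h)
    linarith [hx k]
  constructor <;> linarith [abs_le.1 hx']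

theorem T1_mem_support (hP : P = (1 / 2 : ℝ≥0∞) • P.map T1 + (1 / 2 : ℝ≥0∞) • P.map T2)
    {x : ℝ} (hx : x ∈ P.support) : T1 x ∈ P.support :=
  Measure.mem_support_of_smul_map_le continuous_T1 (by norm_num)
    ((Measure.le_add_right le_rfl).trans_eq hP.symm) hx

theorem T2_mem_support (hP : P = (1 / 2 : ℝ≥0∞) • P.map T1 + (1 / 2 : ℝ≥0∞) • P.map T2)
    {x : ℝ} (hx : x ∈ P.support) : T2 x ∈ P.support :=
  Measure.mem_support_of_smul_map_le continuous_T2 (by norm_num)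
    ((Measure.le_add_left le_rfl).trans_eq hP.symm) hx

theorem support_infinite_of_eq_half_map_T1_add_half_map_T2 [IsProbabilityMeasure P]
    (hP : P = (1 / 2 : ℝ≥0∞) • P.map T1 + (1 / 2 : ℝ≥0∞) • P.map T2) :
    P.support.Infinite := by
  obtain ⟨c, hc⟩ := Measure.nonempty_support (IsProbabilityMeasure.ne_zero P)
  have hc0 : 0 ≤ c := (Measure.support_subset_of_isClosed isClosed_Icc
    (ae_mem_Icc_of_eq_half_map_T1_add_half_map_T2 hP) hc).1
  have hmem : ∀ k, T1^[k] (T2 c) ∈ P.support := fun k => by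
    induction k with
    | zero => exact T2_mem_support hP hc
    | succ k ih => rw [Function.iterate_succ_apply']; exact T1_mem_support hP ih
  have hformula : ∀ k, T1^[k] (T2 c) = T2 c / 3 ^ k := fun k => by
    induction k with
    | zero => simp
    | succ k ih => rw [Function.iterate_succ_apply', ih, T1, pow_succ, div_div]
  have hanti : StrictAnti fun k : ℕ => T1^[k] (T2 c) := fun i j hij => by
    simp only [hformula]
    exact div_lt_div_of_pos_left (by unfold T2; positivity) (by positivity)
      (pow_lt_pow_right₀ (by norm_num) hij)
  exact Set.infinite_of_injective_forall_mem hanti.injective hmem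

end CantorMeasure

section Quantization

variable {P : Measure ℝ} {n : ℕ} {α : Finset (ℝ × ℝ)}

theorem rho_nonneg (x : ℝ) (p : ℝ × ℝ) : 0 ≤ rho x p := by unfold rho; positivity

theorem continuous_rho (p : ℝ × ℝ) : Continuous fun x => rho x p := by unfold rho; fun_prop

theorem continuous_inf'_rho (hα : α.Nonempty) : Continuous fun x => α.inf' hα (rho x) :=
  Continuous.finset_inf'_apply hα fun p _ => continuous_rho p

theorem distortion_eq_integral_inf' (P : Measure ℝ) (hα : α.Nonempty) :
    distortion P α = ∫ x, α.inf' hα (rho x) ∂P := by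
  unfold distortion
  congr 1 with x
  rw [Finset.inf'_eq_csInf_image, Set.image_eq_range]
  rfl

theorem distortion_nonneg (P : Measure ℝ) (A : Set (ℝ × ℝ)) : 0 ≤ distortion P A :=
  integral_nonneg fun x => Real.iInf_nonneg fun a => rho_nonneg x a

theorem Vc_le_distortion (hα : α.Nonempty) (hcard : α.card ≤ n)
    (hsub : (α : Set (ℝ × ℝ)) ⊆ ⋃ j ∈ Finset.Icc 1 n, Sj j) : Vc P n ≤ distortion P α :=
  csInf_le ⟨0, by rintro _ ⟨β, -, -, -, rfl⟩; exact distortion_nonneg P _⟩ ⟨α, hα, hcard, hsub, rfl⟩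

theorem one_div_le_snd_of_mem_iUnion_Sj {p : ℝ × ℝ} (hp : p ∈ ⋃ j ∈ Finset.Icc 1 n, Sj j) :
    1 / (n : ℝ) ≤ p.2 := by
  simp only [mem_iUnion, Finset.mem_Icc] at hp
  obtain ⟨j, ⟨hj, hjn⟩, -, hpj⟩ := hp
  rw [hpj]
  have : (0 : ℝ) < j := by exact_mod_cast hj
  gcongr

theorem fst_mem_Icc_of_mem_iUnion_Sj {p : ℝ × ℝ} (hp : p ∈ ⋃ j ∈ Finset.Icc 1 n, Sj j) :
    p.1 ∈ Icc (0 : ℝ) 1 := by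
  simp only [mem_iUnion] at hp
  obtain ⟨j, -, hp1, -⟩ := hp
  exact hp1

theorem insert_erase_subset_iUnion_Sj (hn : 1 ≤ n)
    (hsub : (α : Set (ℝ × ℝ)) ⊆ ⋃ j ∈ Finset.Icc 1 n, Sj j) (q : ℝ × ℝ) {c : ℝ}
    (hc : c ∈ Icc (0 : ℝ) 1) :
    ((insert (c, 1 / (n : ℝ)) (α.erase q) : Finset (ℝ × ℝ)) : Set (ℝ × ℝ)) ⊆
      ⋃ j ∈ Finset.Icc 1 n, Sj j := by
  rw [Finset.coe_insert, Set.insert_subset_iff]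
  exact ⟨mem_biUnion (Finset.mem_Icc.2 ⟨hn, le_rfl⟩) ⟨hc, rfl⟩,
    (Finset.coe_subset.2 (α.erase_subset q)).trans hsub⟩

theorem Vc_lt_integral_of_inf'_rho_lt_on {β : Finset (ℝ × ℝ)} (hβ : β.Nonempty)
    (hcard : β.card ≤ n) (hsub : (β : Set (ℝ × ℝ)) ⊆ ⋃ j ∈ Finset.Icc 1 n, Sj j)
    {g : ℝ → ℝ} (hg : Integrable g P) (hle : ∀ x, β.inf' hβ (rho x) ≤ g x) {s : Set ℝ}
    (hs : P s ≠ 0) (hlt : ∀ x ∈ s, β.inf' hβ (rho x) < g x) :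
    Vc P n < ∫ x, g x ∂P := by
  have hβint : Integrable (fun x => β.inf' hβ (rho x)) P :=
    hg.mono' (continuous_inf'_rho hβ).aestronglyMeasurable <| ae_of_all _ fun x => by
      rw [Real.norm_of_nonneg (Finset.le_inf' hβ _ fun p _ => rho_nonneg x p)]
      exact hle x
  calc Vc P n ≤ distortion P β := Vc_le_distortion hβ hcard hsub
    _ = ∫ x, β.inf' hβ (rho x) ∂P := distortion_eq_integral_inf' P hβ
    _ < ∫ x, g x ∂P := integral_lt_integral_of_le_of_lt_on hβint hg hle hs hlt

theorem rho_mk_lt_inf'_rho (hα : α.Nonempty)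
    (hsub : (α : Set (ℝ × ℝ)) ⊆ ⋃ j ∈ Finset.Icc 1 n, Sj j) {c : ℝ} (hc : c ∉ α.image Prod.fst) :
    rho c (c, 1 / (n : ℝ)) < α.inf' hα (rho c) :=
  (Finset.lt_inf'_iff hα).2 fun p hp => by
    have hcp : c - p.1 ≠ 0 := sub_ne_zero.2 fun h => hc (Finset.mem_image.2 ⟨p, hp, h.symm⟩)
    have : (1 / (n : ℝ)) ^ 2 ≤ p.2 ^ 2 := by
      gcongr
      exact one_div_le_snd_of_mem_iUnion_Sj (hsub hp)
    unfold rho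
    nlinarith [sq_pos_of_ne_zero hcp]

theorem integrable_inf'_rho [IsFiniteMeasure P] (hPI : ∀ᵐ x ∂P, x ∈ Icc (0 : ℝ) 1)
    (hα : α.Nonempty) : Integrable (fun x => α.inf' hα (rho x)) P :=
  (continuous_inf'_rho hα).integrable_of_ae_mem_isCompact isCompact_Icc hPI

variable [IsProbabilityMeasure P]

theorem measure_inf'_rho_eq_rho_ne_zero (hPI : ∀ᵐ x ∂P, x ∈ Icc (0 : ℝ) 1)
    (hsupp : P.support.Infinite) (hα : α.Nonempty) (hcard : α.card ≤ n)
    (hsub : (α : Set (ℝ × ℝ)) ⊆ ⋃ j ∈ Finset.Icc 1 n, Sj j) (hopt : distortion P α = Vc P n)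
    {q : ℝ × ℝ} (hq : q ∈ α) : P {x | α.inf' hα (rho x) = rho x q} ≠ 0 := by
  intro h0
  have hα' : (α.erase q).Nonempty := by
    rw [Finset.nonempty_iff_ne_empty, Ne, Finset.erase_eq_empty_iff]
    rintro (rfl | rfl)
    · exact Finset.not_nonempty_empty hα
    · simp at h0
  have hae : (fun x => (α.erase q).inf' hα' (rho x)) =ᵐ[P] fun x => α.inf' hα (rho x) :=
    measure_mono_null (fun x hx => by_contra fun hxq => hx (Finset.inf'_erase_of_ne hα hα' hxq)) h0
  obtain ⟨c, hc, hcα⟩ := hsupp.exists_notMem_finset ((α.erase q).image Prod.fst)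
  have hn : 1 ≤ n := hα.card_pos.trans_le hcard
  have hcU := rho_mk_lt_inf'_rho hα' ((Finset.coe_subset.2 (α.erase_subset q)).trans hsub) hcα
  have hU : P {x | rho x (c, 1 / (n : ℝ)) < (α.erase q).inf' hα' (rho x)} ≠ 0 :=
    ((Measure.mem_support_iff_forall c).1 hc _
      ((isOpen_lt (continuous_rho _) (continuous_inf'_rho hα')).mem_nhds hcU)).ne'
  have hlt := Vc_lt_integral_of_inf'_rho_lt_on (Finset.insert_nonempty _ _)
    ((Finset.card_insert_erase_le hq _).trans hcard)
    (insert_erase_subset_iUnion_Sj hn hsub q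
      (Measure.support_subset_of_isClosed isClosed_Icc hPI hc))
    ((integrable_inf'_rho hPI hα).congr hae.symm)
    (fun x => Finset.inf'_mono _ (Finset.subset_insert _ _) hα') hU
    (fun x hx => (Finset.inf'_le _ (Finset.mem_insert_self _ _)).trans_lt hx)
  rw [integral_congr_ae hae, ← distortion_eq_integral_inf', hopt] at hlt
  exact hlt.false

theorem snd_eq_one_div_of_distortion_eq_Vc (hPI : ∀ᵐ x ∂P, x ∈ Icc (0 : ℝ) 1)
    (hsupp : P.support.Infinite) (hα : α.Nonempty) (hcard : α.card ≤ n)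
    (hsub : (α : Set (ℝ × ℝ)) ⊆ ⋃ j ∈ Finset.Icc 1 n, Sj j) (hopt : distortion P α = Vc P n) :
    ∀ p ∈ α, p.2 = 1 / (n : ℝ) := by
  intro p hp
  by_contra hpn
  have hn : 1 ≤ n := hα.card_pos.trans_le hcard
  have hp2 : 1 / (n : ℝ) < p.2 := (one_div_le_snd_of_mem_iUnion_Sj (hsub hp)).lt_of_ne' hpn
  have hrho : ∀ x, rho x (p.1, 1 / (n : ℝ)) < rho x p := fun x => by
    have : (1 / (n : ℝ)) ^ 2 < p.2 ^ 2 := by gcongr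
    unfold rho
    linarith
  set β := insert (p.1, 1 / (n : ℝ)) (α.erase p)
  have hβ : β.Nonempty := Finset.insert_nonempty _ _
  have hβp : ∀ x, β.inf' hβ (rho x) < rho x p := fun x =>
    (Finset.inf'_le _ (Finset.mem_insert_self _ _)).trans_lt (hrho x)
  have hle : ∀ x, β.inf' hβ (rho x) ≤ α.inf' hα (rho x) := fun x =>
    Finset.le_inf' hα _ fun q hq => by
      by_cases hqp : q = p
      · exact hqp ▸ (hβp x).le
      · exact Finset.inf'_le _ (Finset.mem_insert_of_mem (Finset.mem_erase.2 ⟨hqp, hq⟩))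
  have hlt := Vc_lt_integral_of_inf'_rho_lt_on hβ ((Finset.card_insert_erase_le hp _).trans hcard)
    (insert_erase_subset_iUnion_Sj hn hsub p (fst_mem_Icc_of_mem_iUnion_Sj (hsub hp)))
    (integrable_inf'_rho hPI hα) hle
    (measure_inf'_rho_eq_rho_ne_zero hPI hsupp hα hcard hsub hopt hp)
    (fun x hx => (hβp x).trans_eq hx.symm)
  rw [← distortion_eq_integral_inf', hopt] at hlt
  exact hlt.false

end Quantization

theorem optimal_sets_lie_on_Sn_general (P : Measure ℝ) [IsProbabilityMeasure P]
    (hP : P = (1 / 2 : ℝ≥0∞) • P.map T1 + (1 / 2 : ℝ≥0∞) • P.map T2)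
    (n : ℕ) (α : Finset (ℝ × ℝ)) (hne : α.Nonempty) (hcard : α.card ≤ n)
    (hsub : (↑α : Set (ℝ × ℝ)) ⊆ ⋃ j ∈ Finset.Icc 1 n, Sj j)
    (hopt : distortion P (↑α : Set (ℝ × ℝ)) = Vc P n) :
    ∀ p ∈ α, p.2 = 1 / (n : ℝ) :=
  snd_eq_one_div_of_distortion_eq_Vc (ae_mem_Icc_of_eq_half_map_T1_add_half_map_T2 hP)
    (support_infinite_of_eq_half_map_T1_add_half_map_T2 hP) hne hcard hsub hopt

theorem optimal_sets_lie_on_Sn (P : Measure ℝ) [IsProbabilityMeasure P]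
    (hP : P = (1 / 2 : ℝ≥0∞) • P.map T1 + (1 / 2 : ℝ≥0∞) • P.map T2)
    (n : ℕ) (hn : 2 ≤ n) (α : Finset (ℝ × ℝ)) (hne : α.Nonempty) (hcard : α.card ≤ n)
    (hsub : (↑α : Set (ℝ × ℝ)) ⊆ ⋃ j ∈ Finset.Icc 1 n, Sj j)
    (hopt : distortion P (↑α : Set (ℝ × ℝ)) = Vc P n) :
    ∀ p ∈ α, p.2 = 1 / (n : ℝ) :=
  optimal_sets_lie_on_Sn_general P hP n α hne hcard hsub hopt
end
end
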